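/- arXiv:2601.00782 — 8 statements merged into one kernel-verified Lean document; each statement's English description precedes it below -/
import Mathlib

section
/- The convolution of two log-concave sequences of nonnegative real numbers is log-concave. Equivalently, if p(t) and q(t) are polynomials with nonnegative log-concave coefficient sequences with no internal zeros, then the coefficient sequence of p(t)q(t) is log-concave. -/
/-!
A nonnegative log-concave sequence without internal zeros is PF₂:
`a i * a (j + 1) ≤ a (i + 1) * a j` whenever `i ≤ j` (induct on `j`; the zero cases are exactly
where "no internal zeros" enters).
Extend `a` and `b` by zero to `ℤ`. Then `c (k - 1)`, `c k` and `c (k + 1)` are the sums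
`∑ g u`, `∑ f u = ∑ g v` and `∑ f v` with `f m = a m`, `g m = a (m - 1)`, `u m = b (k - m)`,
`v m = b (k + 1 - m)`, and by the Binet–Cauchy identity `c k ^ 2 - c (k - 1) * c (k + 1)` is half
the double sum of `(f m g n - g m f n) (u m v n - v m u n)`, whose two factors always have the same
sign by PF₂.
-/

open Finset

variable {R : Type*} [CommRing R] [LinearOrder R] [IsStrictOrderedRing R]

/-- Pólya frequency of order 2 (PF₂), stated through consecutive minors. -/
def IsPF2 {ι : Type*} [Preorder ι] [Add ι] [One ι] (F : ι → R) : Prop :=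
  ∀ i j, i ≤ j → F i * F (j + 1) ≤ F (i + 1) * F j

theorem isPF2_of_logConcave {a : ℕ → R} (h0 : ∀ i, 0 ≤ a i)
    (hlc : ∀ i, 1 ≤ i → a (i - 1) * a (i + 1) ≤ a i ^ 2)
    (hiz : ∀ i j k, i < j → j < k → 0 < a i → 0 < a k → 0 < a j) : IsPF2 a := by
  intro i j hij
  induction j, hij using Nat.le_induction with
  | base => exact (mul_comm _ _).le
  | succ j hij ih =>
    show a i * a (j + 2) ≤ a (i + 1) * a (j + 1)
    have hlcj : a j * a (j + 2) ≤ a (j + 1) ^ 2 := hlc (j + 1) (by omega)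
    suffices a i * a (j + 2) = 0 ∨ 0 < a j by
      rcases this with hzero | hj
      · rw [hzero]
        exact mul_nonneg (h0 _) (h0 _)
      refine le_of_mul_le_mul_left ?_ hj
      calc a j * (a i * a (j + 2)) = a i * (a j * a (j + 2)) := by ring
        _ ≤ a i * a (j + 1) ^ 2 := mul_le_mul_of_nonneg_left hlcj (h0 i)
        _ = a (j + 1) * (a i * a (j + 1)) := by ring
        _ ≤ a (j + 1) * (a (i + 1) * a j) := mul_le_mul_of_nonneg_left ih (h0 _)
        _ = a j * (a (i + 1) * a (j + 1)) := by ring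
    rcases (h0 j).eq_or_lt with hj | hj
    · left
      rcases (h0 (j + 1)).eq_or_lt with hj1 | hj1
      · by_contra hne
        obtain ⟨hi, hk⟩ := mul_ne_zero_iff.1 hne
        exact (hiz i (j + 1) (j + 2) (by omega) (by omega) ((h0 i).lt_of_ne' hi)
          ((h0 _).lt_of_ne' hk)).ne' hj1.symm
      · have hprod : a i * a (j + 1) = 0 :=
          le_antisymm (by simpa [← hj] using ih) (mul_nonneg (h0 _) (h0 _))
        rw [(mul_eq_zero.1 hprod).resolve_right hj1.ne', zero_mul]
    · exact .inr hj

section ExtendByZero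

variable {M : Type*} [Zero M]

def extendByZero (a : ℕ → M) (m : ℤ) : M :=
  if 0 ≤ m then a m.toNat else 0

theorem extendByZero_of_nonneg (a : ℕ → M) {m : ℤ} (hm : 0 ≤ m) :
    extendByZero a m = a m.toNat :=
  if_pos hm

theorem extendByZero_of_neg (a : ℕ → M) {m : ℤ} (hm : m < 0) : extendByZero a m = 0 :=
  if_neg hm.not_ge

@[simp]
theorem extendByZero_natCast (a : ℕ → M) (n : ℕ) : extendByZero a n = a n := by
  simp [extendByZero]

theorem extendByZero_nonneg [Preorder M] {a : ℕ → M} (h0 : ∀ i, 0 ≤ a i) (m : ℤ) :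
    0 ≤ extendByZero a m := by
  unfold extendByZero
  split_ifs
  exacts [h0 _, le_rfl]

end ExtendByZero

theorem IsPF2.extendByZero {a : ℕ → R} (ha : IsPF2 a) (h0 : ∀ i, 0 ≤ a i) :
    IsPF2 (extendByZero a) := by
  intro i j hij
  rcases lt_or_ge i 0 with hi | hi
  · rw [extendByZero_of_neg a hi, zero_mul]
    exact mul_nonneg (extendByZero_nonneg h0 _) (extendByZero_nonneg h0 _)
  · lift i to ℕ using hi
    lift j to ℕ using by omega
    rw [← Nat.cast_add_one (R := ℤ), ← Nat.cast_add_one (R := ℤ)]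
    simpa only [extendByZero_natCast] using ha i j (by omega)

theorem sum_extendByZero_mul_extendByZero {M : Type*} [NonUnitalNonAssocSemiring M]
    (a b : ℕ → M) {n : ℕ} {t s : ℤ} (hs : s = n + t) {S : Finset ℤ} (hS : Icc t s ⊆ S) :
    ∑ m ∈ S, extendByZero a (m - t) * extendByZero b (s - m) =
      ∑ i ∈ range (n + 1), a i * b (n - i) := by
  rw [← sum_subset hS]
  · refine sum_nbij' (fun m ↦ (m - t).toNat) (fun i ↦ i + t) ?_ ?_ ?_ ?_ ?_ <;>
      simp only [mem_Icc, mem_range]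
    · omega
    · omega
    · omega
    · omega
    · intro m hm
      rw [extendByZero_of_nonneg a (by omega), extendByZero_of_nonneg b (by omega)]
      congr 2
      omega
  · intro m _ hm
    simp only [mem_Icc, not_and_or, not_le] at hm
    rcases hm with hm | hm
    · rw [extendByZero_of_neg a (by omega), zero_mul]
    · rw [extendByZero_of_neg b (by omega), mul_zero]

theorem sum_mul_sum_le_sum_mul_sum_of_cross_le {ι : Type*} [LinearOrder ι] (S : Finset ι)
    {f g u v : ι → R} (hfg : ∀ m n, m ≤ n → g m * f n ≤ f m * g n)
    (huv : ∀ m n, m ≤ n → v m * u n ≤ u m * v n) :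
    (∑ m ∈ S, g m * u m) * (∑ m ∈ S, f m * v m) ≤
      (∑ m ∈ S, f m * u m) * (∑ m ∈ S, g m * v m) := by
  set Y : ι → ι → R := fun m n ↦ f m * u m * (g n * v n) - g m * u m * (f n * v n)
  have hY : ∑ m ∈ S, ∑ n ∈ S, Y m n =
      (∑ m ∈ S, f m * u m) * (∑ m ∈ S, g m * v m) -
        (∑ m ∈ S, g m * u m) * (∑ m ∈ S, f m * v m) := by
    simp only [Y, sum_sub_distrib, sum_mul_sum]
  have binetCauchy : ∑ m ∈ S, ∑ n ∈ S, (f m * g n - g m * f n) * (u m * v n - v m * u n) =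
      2 * ∑ m ∈ S, ∑ n ∈ S, Y m n := by
    rw [two_mul]
    nth_rewrite 2 [sum_comm]
    rw [← sum_add_distrib]
    refine sum_congr rfl fun m _ ↦ ?_
    rw [← sum_add_distrib]
    refine sum_congr rfl fun n _ ↦ ?_
    ring
  have hnonneg :
      0 ≤ ∑ m ∈ S, ∑ n ∈ S, (f m * g n - g m * f n) * (u m * v n - v m * u n) := by
    refine sum_nonneg fun m _ ↦ sum_nonneg fun n _ ↦ ?_
    rcases le_total m n with h | h
    · exact mul_nonneg (sub_nonneg.2 (hfg m n h)) (sub_nonneg.2 (huv m n h))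
    · exact mul_nonneg_of_nonpos_of_nonpos (by linarith [hfg n m h]) (by linarith [huv n m h])
  rw [binetCauchy, hY] at hnonneg
  linarith

theorem sum_mul_sum_le_of_isPF2 {A B : ℤ → R} (hA : IsPF2 A) (hB : IsPF2 B) (S : Finset ℤ)
    (K : ℤ) :
    (∑ m ∈ S, A (m - 1) * B (K - m)) * (∑ m ∈ S, A m * B (K + 1 - m)) ≤
      (∑ m ∈ S, A m * B (K - m)) * (∑ m ∈ S, A (m - 1) * B (K + 1 - m)) := by
  refine sum_mul_sum_le_sum_mul_sum_of_cross_le S (f := A) (g := fun m ↦ A (m - 1))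
    (u := fun m ↦ B (K - m)) (v := fun m ↦ B (K + 1 - m)) (fun m n h ↦ ?_) (fun m n h ↦ ?_)
  · simpa only [sub_add_cancel] using hA (m - 1) (n - 1) (by omega)
  · have := hB (K - n) (K - m) (by omega)
    rw [sub_add_eq_add_sub, sub_add_eq_add_sub] at this
    linarith

theorem stmt1_general (a b : ℕ → ℝ)
    (ha0 : ∀ i, 0 ≤ a i) (hb0 : ∀ i, 0 ≤ b i)
    (halc : ∀ i, 1 ≤ i → a (i - 1) * a (i + 1) ≤ a i ^ 2)
    (hblc : ∀ i, 1 ≤ i → b (i - 1) * b (i + 1) ≤ b i ^ 2)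
    (haiz : ∀ i j k, i < j → j < k → 0 < a i → 0 < a k → 0 < a j)
    (hbiz : ∀ i j k, i < j → j < k → 0 < b i → 0 < b k → 0 < b j)
    (c : ℕ → ℝ) (hc : ∀ k, c k = ∑ i ∈ Finset.range (k + 1), a i * b (k - i)) :
    ∀ k, 1 ≤ k → c (k - 1) * c (k + 1) ≤ c k ^ 2 := by
  intro k hk
  have hA := (isPF2_of_logConcave ha0 halc haiz).extendByZero ha0
  have hB := (isPF2_of_logConcave hb0 hblc hbiz).extendByZero hb0
  set S := Icc (0 : ℤ) (k + 1)
  have hfu : ∑ m ∈ S, extendByZero a m * extendByZero b (k - m) = c k := by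
    simpa [hc] using sum_extendByZero_mul_extendByZero a b (n := k) (t := 0) (s := k) (by simp)
      (Icc_subset_Icc le_rfl (by omega))
  have hgv : ∑ m ∈ S, extendByZero a (m - 1) * extendByZero b (k + 1 - m) = c k := by
    rw [hc, sum_extendByZero_mul_extendByZero a b (n := k) (by ring)
      (Icc_subset_Icc (by omega) le_rfl)]
  have hgu : ∑ m ∈ S, extendByZero a (m - 1) * extendByZero b (k - m) = c (k - 1) := by
    rw [hc, sum_extendByZero_mul_extendByZero a b (n := k - 1) (by omega)
      (Icc_subset_Icc (by omega) (by omega))]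
  have hfv : ∑ m ∈ S, extendByZero a m * extendByZero b (k + 1 - m) = c (k + 1) := by
    simpa [hc] using sum_extendByZero_mul_extendByZero a b (n := k + 1) (t := 0) (s := k + 1)
      (by simp) le_rfl
  simpa only [hfu, hgv, hgu, hfv, sq] using sum_mul_sum_le_of_isPF2 hA hB S k

/-- The convolution of two log-concave sequences of nonnegative real numbers
(with no internal zeros, supported in finite ranges) is log-concave. -/
theorem stmt1 (da db : ℕ) (a b : ℕ → ℝ)
    (ha0 : ∀ i, 0 ≤ a i) (hb0 : ∀ i, 0 ≤ b i)
    (hasupp : ∀ i, da < i → a i = 0) (hbsupp : ∀ i, db < i → b i = 0)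
    (halc : ∀ i, 1 ≤ i → a (i - 1) * a (i + 1) ≤ a i ^ 2)
    (hblc : ∀ i, 1 ≤ i → b (i - 1) * b (i + 1) ≤ b i ^ 2)
    (haiz : ∀ i j k, i < j → j < k → 0 < a i → 0 < a k → 0 < a j)
    (hbiz : ∀ i j k, i < j → j < k → 0 < b i → 0 < b k → 0 < b j)
    (c : ℕ → ℝ) (hc : ∀ k, c k = ∑ i ∈ Finset.range (k + 1), a i * b (k - i)) :
    ∀ k, 1 ≤ k → c (k - 1) * c (k + 1) ≤ c k ^ 2 :=
  stmt1_general a b ha0 hb0 halc hblc haiz hbiz c hc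
end

section
/- If P_1 and P_2 are finite ranked posets each admitting a symmetric chain decomposition, then their Cartesian product P_1 × P_2 (ordered componentwise, with rank the sum of ranks) admits a symmetric chain decomposition. In particular, every finite product of chains C_{r_1} × C_{r_2} × ... × C_{r_n} admits a symmetric chain decomposition. -/
/-!
Two saturated chains `l₁`, `l₂` of lengths `a + 1`, `b + 1` span a grid `[0, a] × [0, b]`,
which splits into the `min a b + 1` hooks that climb the column `x = i` to height `b - i` and
then run along that row to `x = a`. With `r₁`, `r₂` the bottom ranks, hook `i` goes from rank
`r₁ + r₂ + i` to `r₁ + r₂ + a + b - i`; since `2 rⱼ + len lⱼ - 1 = nⱼ` for a symmetric chain,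
these two ranks add up to `n₁ + n₂`. Taking the hooks of all pairs of chains gives a symmetric
chain decomposition of `P₁ × P₂`, and products of chains follow by induction on the number of
factors, `C_r` being a single symmetric chain.
-/

/-- `S` is a symmetric chain decomposition of the poset `Q` (with rank function `ρ` and
total rank `n`): a partition of `Q` into saturated chains, each going from rank `r` to
rank `n - r`. -/
def IsSCD {Q : Type} [PartialOrder Q] (ρ : Q → ℕ) (n : ℕ) (S : Finset (List Q)) : Prop :=
  (∀ q : Q, ∃! l, l ∈ S ∧ q ∈ l) ∧
  ∀ l ∈ S, l ≠ [] ∧ l.Chain' (· ⋖ ·) ∧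
    ∃ x y, l.head? = some x ∧ l.getLast? = some y ∧ ρ x + ρ y = n

/-- Only the cover condition is imposed; minimal elements need not have rank `0`. -/
def IsRankFunction {Q : Type*} [Preorder Q] (ρ : Q → ℕ) : Prop :=
  ∀ ⦃x y : Q⦄, x ⋖ y → ρ y = ρ x + 1

def IsSymmetricChain {Q : Type*} [Preorder Q] (ρ : Q → ℕ) (n : ℕ) (l : List Q) : Prop :=
  l ≠ [] ∧ l.IsChain (· ⋖ ·) ∧ ∃ x y, l.head? = some x ∧ l.getLast? = some y ∧ ρ x + ρ y = n

theorem isSCD_iff {Q : Type} [PartialOrder Q] {ρ : Q → ℕ} {n : ℕ} {S : Finset (List Q)} :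
    IsSCD ρ n S ↔ (∀ q, ∃! l, l ∈ S ∧ q ∈ l) ∧ ∀ l ∈ S, IsSymmetricChain ρ n l :=
  Iff.rfl

section GetD

variable {Q : Type*} [Inhabited Q] {l : List Q}

theorem exists_getD_eq_of_mem {q : Q} (h : q ∈ l) : ∃ x < l.length, l.getD x default = q := by
  obtain ⟨x, hx, rfl⟩ := List.mem_iff_getElem.mp h
  exact ⟨x, hx, List.getD_eq_getElem _ _ hx⟩

theorem getD_mem_of_lt {x : ℕ} (hx : x < l.length) : l.getD x default ∈ l := by
  rw [List.getD_eq_getElem _ _ hx]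
  exact List.getElem_mem hx

theorem getD_zero_of_head?_eq {q : Q} (h : l.head? = some q) : l.getD 0 default = q := by
  rw [List.getD_eq_getElem?_getD, ← List.head?_eq_getElem?, h, Option.getD_some]

theorem getD_length_sub_one_of_getLast?_eq {q : Q} (h : l.getLast? = some q) :
    l.getD (l.length - 1) default = q := by
  rw [List.getD_eq_getElem?_getD, ← List.getLast?_eq_getElem?, h, Option.getD_some]

end GetD

section SaturatedChain

variable {Q : Type*} [Preorder Q] [Inhabited Q] {ρ : Q → ℕ} {l : List Q}

theorem covBy_getD_of_isChain (hl : l.IsChain (· ⋖ ·)) {x y : ℕ} (hxy : x ⋖ y)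
    (hy : y < l.length) : l.getD x default ⋖ l.getD y default := by
  obtain rfl := Nat.covBy_iff_add_one_eq.mp hxy
  rw [List.getD_eq_getElem _ _ (by omega), List.getD_eq_getElem _ _ hy]
  exact List.isChain_iff_getElem.mp hl x hy

theorem rank_getD_of_isChain (hρ : IsRankFunction ρ) (hl : l.IsChain (· ⋖ ·)) :
    ∀ {x : ℕ}, x < l.length → ρ (l.getD x default) = ρ (l.getD 0 default) + x
  | 0, _ => rfl
  | x + 1, hx => by
    rw [hρ (covBy_getD_of_isChain hl (Nat.covBy_iff_add_one_eq.mpr rfl) hx),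
      rank_getD_of_isChain hρ hl (by omega), Nat.add_assoc]

theorem eq_of_getD_eq_of_isChain (hρ : IsRankFunction ρ) (hl : l.IsChain (· ⋖ ·)) {x y : ℕ}
    (hx : x < l.length) (hy : y < l.length) (h : l.getD x default = l.getD y default) :
    x = y := by
  have := rank_getD_of_isChain hρ hl hx
  rw [h, rank_getD_of_isChain hρ hl hy] at this
  omega

theorem IsSymmetricChain.two_mul_rank_add_length (hρ : IsRankFunction ρ) {n : ℕ}
    (h : IsSymmetricChain ρ n l) : 2 * ρ (l.getD 0 default) + (l.length - 1) = n := by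
  obtain ⟨hne, hl, x, y, hx, hy, hxy⟩ := h
  have hlen := List.length_pos_iff.mpr hne
  rw [← getD_zero_of_head?_eq hx, ← getD_length_sub_one_of_getLast?_eq hy,
    rank_getD_of_isChain hρ hl (x := l.length - 1) (by omega)] at hxy
  omega

end SaturatedChain

def gridPath (a b i : ℕ) : List (ℕ × ℕ) :=
  (List.range (b - i + 1)).map (i, ·) ++ (List.range' (i + 1) (a - i)).map (·, b - i)

section GridPath

variable {a b i x y : ℕ}

theorem mem_gridPath :
    (x, y) ∈ gridPath a b i ↔ (x = i ∧ y ≤ b - i) ∨ (i < x ∧ x ≤ a ∧ y = b - i) := by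
  simp only [gridPath, List.mem_append, List.mem_map, List.mem_range, List.mem_range'_1,
    Prod.mk.injEq]
  constructor
  · rintro (⟨y', hy', rfl, rfl⟩ | ⟨x', hx', rfl, rfl⟩) <;> omega
  · rintro (⟨rfl, hy⟩ | ⟨hix, hxa, rfl⟩)
    · exact Or.inl ⟨y, by omega, rfl, rfl⟩
    · exact Or.inr ⟨x, by omega, rfl, rfl⟩

theorem le_of_mem_gridPath (hi : i ≤ a) (h : (x, y) ∈ gridPath a b i) : x ≤ a ∧ y ≤ b := by
  rw [mem_gridPath] at h
  omega

theorem mem_gridPath_iff_eq_min (hi : i ≤ b) (hx : x ≤ a) (hy : y ≤ b) :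
    (x, y) ∈ gridPath a b i ↔ i = min x (b - y) := by
  rw [mem_gridPath]
  omega

theorem head?_gridPath : (gridPath a b i).head? = some (i, 0) := by
  simp [gridPath, List.head?_append, List.head?_range]

theorem getLast?_gridPath (hi : i ≤ a) : (gridPath a b i).getLast? = some (a, b - i) := by
  rcases Nat.eq_zero_or_pos (a - i) with h | h
  · simp [gridPath, List.getLast?_range, h]
    omega
  · simp [gridPath, List.getLast?_append, List.getLast?_range', h.ne']
    omega

theorem isChain_covBy_gridPath : (gridPath a b i).IsChain (· ⋖ ·) := by
  simp only [gridPath, List.isChain_append, List.isChain_map, Prod.mk_covBy_mk_iff_right,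
    Prod.mk_covBy_mk_iff_left, List.getLast?_map, List.head?_map, List.getLast?_range,
    List.head?_range']
  refine ⟨(List.isChain_range _ _).mpr fun m _ => Order.covBy_add_one m,
    (List.isChain_range' _ _ 1).imp fun _ _ h => Nat.covBy_iff_add_one_eq.mpr h.symm, ?_⟩
  split_ifs <;> simp [Prod.mk_covBy_mk_iff]

end GridPath

section ProductOfChains

variable {P₁ P₂ : Type*} [Inhabited P₁] [Inhabited P₂] [DecidableEq P₁] [DecidableEq P₂]
  {l₁ : List P₁} {l₂ : List P₂}

def productChains (l₁ : List P₁) (l₂ : List P₂) : Finset (List (P₁ × P₂)) :=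
  (Finset.range (min (l₁.length - 1) (l₂.length - 1) + 1)).image fun i =>
    (gridPath (l₁.length - 1) (l₂.length - 1) i).map
      (Prod.map (l₁.getD · default) (l₂.getD · default))

theorem mem_of_mem_productChains (hl₁ : l₁ ≠ []) (hl₂ : l₂ ≠ []) {c : List (P₁ × P₂)}
    (hc : c ∈ productChains l₁ l₂) {p : P₁} {q : P₂} (hpq : (p, q) ∈ c) : p ∈ l₁ ∧ q ∈ l₂ := by
  obtain ⟨i, hi, rfl⟩ := Finset.mem_image.mp hc
  rw [Finset.mem_range] at hi
  obtain ⟨⟨x, y⟩, hxy, hpq⟩ := List.mem_map.mp hpq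
  obtain ⟨hx, hy⟩ := le_of_mem_gridPath (by omega) hxy
  obtain ⟨rfl, rfl⟩ := Prod.mk.inj hpq
  have := List.length_pos_iff.mpr hl₁
  have := List.length_pos_iff.mpr hl₂
  exact ⟨getD_mem_of_lt (by omega), getD_mem_of_lt (by omega)⟩

variable [PartialOrder P₁] [PartialOrder P₂] {ρ₁ : P₁ → ℕ} {ρ₂ : P₂ → ℕ}

theorem existsUnique_mem_productChains (hρ₁ : IsRankFunction ρ₁) (hρ₂ : IsRankFunction ρ₂)
    (hl₁ : l₁.IsChain (· ⋖ ·)) (hl₂ : l₂.IsChain (· ⋖ ·)) {p : P₁} {q : P₂} (hp : p ∈ l₁)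
    (hq : q ∈ l₂) : ∃! c, c ∈ productChains l₁ l₂ ∧ (p, q) ∈ c := by
  obtain ⟨x, hx, rfl⟩ := exists_getD_eq_of_mem hp
  obtain ⟨y, hy, rfl⟩ := exists_getD_eq_of_mem hq
  have hi : min x (l₂.length - 1 - y) < min (l₁.length - 1) (l₂.length - 1) + 1 := by omega
  refine ⟨_, ⟨Finset.mem_image_of_mem _ (Finset.mem_range.mpr hi), List.mem_map_of_mem
    ((mem_gridPath_iff_eq_min (by omega) (by omega) (by omega)).mpr rfl)⟩, ?_⟩
  rintro c ⟨hc, hpq⟩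
  obtain ⟨i, hi, rfl⟩ := Finset.mem_image.mp hc
  rw [Finset.mem_range] at hi
  obtain ⟨⟨x', y'⟩, hxy', hpq'⟩ := List.mem_map.mp hpq
  obtain ⟨hx', hy'⟩ := le_of_mem_gridPath (by omega) hxy'
  obtain ⟨h₁, h₂⟩ := Prod.mk.inj hpq'
  obtain rfl := eq_of_getD_eq_of_isChain hρ₁ hl₁ (by omega) hx h₁
  obtain rfl := eq_of_getD_eq_of_isChain hρ₂ hl₂ (by omega) hy h₂
  rw [mem_gridPath_iff_eq_min (by omega) hx' hy'] at hxy'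
  rw [hxy']

theorem IsSymmetricChain.of_mem_productChains (hρ₁ : IsRankFunction ρ₁)
    (hρ₂ : IsRankFunction ρ₂) {n₁ n₂ : ℕ} (h₁ : IsSymmetricChain ρ₁ n₁ l₁)
    (h₂ : IsSymmetricChain ρ₂ n₂ l₂) {c : List (P₁ × P₂)} (hc : c ∈ productChains l₁ l₂) :
    IsSymmetricChain (fun p : P₁ × P₂ => ρ₁ p.1 + ρ₂ p.2) (n₁ + n₂) c := by
  obtain ⟨i, hi, rfl⟩ := Finset.mem_image.mp hc
  rw [Finset.mem_range] at hi
  have hlen₁ := List.length_pos_iff.mpr h₁.1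
  have hlen₂ := List.length_pos_iff.mpr h₂.1
  have hhead := head?_gridPath (a := l₁.length - 1) (b := l₂.length - 1) (i := i)
  refine ⟨List.ne_nil_of_mem (List.mem_map_of_mem (List.mem_of_mem_head? hhead)), ?_, _, _,
    by rw [List.head?_map, hhead]; rfl,
    by rw [List.getLast?_map, getLast?_gridPath (by omega)]; rfl, ?_⟩
  · rw [List.isChain_map]
    refine isChain_covBy_gridPath.imp_of_mem_imp ?_
    rintro ⟨x, y⟩ ⟨x', y'⟩ - hxy' hcov
    obtain ⟨hx', hy'⟩ := le_of_mem_gridPath (by omega) hxy'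
    rcases Prod.mk_covBy_mk_iff.mp hcov with ⟨hx, rfl⟩ | ⟨hy, rfl⟩
    · exact Prod.mk_covBy_mk_iff_left.mpr (covBy_getD_of_isChain h₁.2.1 hx (by omega))
    · exact Prod.mk_covBy_mk_iff_right.mpr (covBy_getD_of_isChain h₂.2.1 hy (by omega))
  · have := h₁.two_mul_rank_add_length hρ₁
    have := h₂.two_mul_rank_add_length hρ₂
    simp only [Prod.map]
    rw [rank_getD_of_isChain hρ₁ h₁.2.1 (x := i) (by omega),
      rank_getD_of_isChain hρ₁ h₁.2.1 (x := l₁.length - 1) (by omega),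
      rank_getD_of_isChain hρ₂ h₂.2.1 (x := l₂.length - 1 - i) (by omega)]
    omega

end ProductOfChains

section ProductDecomposition

variable {P₁ P₂ : Type} [Inhabited P₁] [Inhabited P₂] [DecidableEq P₁] [DecidableEq P₂]

def productDecomposition (S₁ : Finset (List P₁)) (S₂ : Finset (List P₂)) :
    Finset (List (P₁ × P₂)) :=
  (S₁ ×ˢ S₂).biUnion fun c => productChains c.1 c.2

variable [PartialOrder P₁] [PartialOrder P₂] {ρ₁ : P₁ → ℕ} {ρ₂ : P₂ → ℕ} {n₁ n₂ : ℕ}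
  {S₁ : Finset (List P₁)} {S₂ : Finset (List P₂)}

theorem IsSCD.prod (hρ₁ : IsRankFunction ρ₁) (hρ₂ : IsRankFunction ρ₂) (h₁ : IsSCD ρ₁ n₁ S₁)
    (h₂ : IsSCD ρ₂ n₂ S₂) :
    IsSCD (fun p : P₁ × P₂ => ρ₁ p.1 + ρ₂ p.2) (n₁ + n₂) (productDecomposition S₁ S₂) := by
  obtain ⟨hpart₁, hchain₁⟩ := isSCD_iff.mp h₁
  obtain ⟨hpart₂, hchain₂⟩ := isSCD_iff.mp h₂
  refine isSCD_iff.mpr ⟨?_, fun c hc => ?_⟩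
  · rintro ⟨p, q⟩
    obtain ⟨l₁, ⟨hl₁, hp⟩, huniq₁⟩ := hpart₁ p
    obtain ⟨l₂, ⟨hl₂, hq⟩, huniq₂⟩ := hpart₂ q
    obtain ⟨c, ⟨hc, hpq⟩, huniq⟩ := existsUnique_mem_productChains hρ₁ hρ₂
      (hchain₁ l₁ hl₁).2.1 (hchain₂ l₂ hl₂).2.1 hp hq
    refine ⟨c, ⟨Finset.mem_biUnion.mpr ⟨(l₁, l₂), Finset.mk_mem_product hl₁ hl₂, hc⟩, hpq⟩, ?_⟩
    rintro c' ⟨hc', hpq'⟩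
    obtain ⟨⟨l₁', l₂'⟩, hl', hc'⟩ := Finset.mem_biUnion.mp hc'
    obtain ⟨hl₁', hl₂'⟩ := Finset.mem_product.mp hl'
    obtain ⟨hp', hq'⟩ :=
      mem_of_mem_productChains (hchain₁ l₁' hl₁').1 (hchain₂ l₂' hl₂').1 hc' hpq'
    obtain rfl := huniq₁ l₁' ⟨hl₁', hp'⟩
    obtain rfl := huniq₂ l₂' ⟨hl₂', hq'⟩
    exact huniq c' ⟨hc', hpq'⟩
  · obtain ⟨⟨l₁, l₂⟩, hl, hc⟩ := Finset.mem_biUnion.mp hc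
    obtain ⟨hl₁, hl₂⟩ := Finset.mem_product.mp hl
    exact IsSymmetricChain.of_mem_productChains hρ₁ hρ₂ (hchain₁ l₁ hl₁) (hchain₂ l₂ hl₂) hc

end ProductDecomposition

section Transport

variable {Q Q' : Type} [PartialOrder Q] [PartialOrder Q'] (e : Q ≃o Q') {ρ : Q' → ℕ}

theorem IsRankFunction.of_comp_orderIso (h : IsRankFunction (ρ ∘ e)) : IsRankFunction ρ :=
  fun x y hxy => by simpa using h ((apply_covBy_apply_iff e.symm).mpr hxy)

theorem IsSCD.of_comp_orderIso [DecidableEq Q'] {n : ℕ} {S : Finset (List Q)}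
    (h : IsSCD (ρ ∘ e) n S) : IsSCD ρ n (S.image (List.map e)) := by
  obtain ⟨hpart, hchain⟩ := isSCD_iff.mp h
  refine isSCD_iff.mpr ⟨fun q => ?_, fun c hc => ?_⟩
  · obtain ⟨l, ⟨hl, hq⟩, huniq⟩ := hpart (e.symm q)
    refine ⟨l.map e, ⟨Finset.mem_image_of_mem _ hl, List.mem_map.mpr ⟨_, hq, by simp⟩⟩, ?_⟩
    rintro c ⟨hc, hqc⟩
    obtain ⟨m, hm, rfl⟩ := Finset.mem_image.mp hc
    obtain ⟨x, hx, rfl⟩ := List.mem_map.mp hqc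
    rw [huniq m ⟨hm, by simpa using hx⟩]
  · obtain ⟨m, hm, rfl⟩ := Finset.mem_image.mp hc
    obtain ⟨hne, hm, x, y, hx, hy, hxy⟩ := hchain m hm
    refine ⟨by simpa using hne, ?_, e x, e y, by simp [hx], by simp [hy], hxy⟩
    exact (List.isChain_map _).mpr (hm.imp fun _ _ h => (apply_covBy_apply_iff e).mpr h)

end Transport

theorem isSCD_of_isEmpty {Q : Type} [PartialOrder Q] [IsEmpty Q] (ρ : Q → ℕ) (n : ℕ) :
    IsSCD ρ n ∅ :=
  isSCD_iff.mpr ⟨isEmptyElim, by simp⟩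

theorem isSCD_of_unique {Q : Type} [PartialOrder Q] [Unique Q] {ρ : Q → ℕ} {n : ℕ}
    (h : ρ default + ρ default = n) : IsSCD ρ n {[default]} :=
  isSCD_iff.mpr ⟨fun q => ⟨[default], by simp [Unique.eq_default q], by simp⟩,
    by simp [IsSymmetricChain, h]⟩

theorem IsRankFunction.prod {P₁ P₂ : Type*} [PartialOrder P₁] [PartialOrder P₂] {ρ₁ : P₁ → ℕ}
    {ρ₂ : P₂ → ℕ} (hρ₁ : IsRankFunction ρ₁) (hρ₂ : IsRankFunction ρ₂) :
    IsRankFunction (fun p : P₁ × P₂ => ρ₁ p.1 + ρ₂ p.2) := by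
  rintro ⟨x₁, x₂⟩ ⟨y₁, y₂⟩ h
  rcases Prod.mk_covBy_mk_iff.mp h with ⟨h₁, rfl⟩ | ⟨h₂, rfl⟩
  · simp only [hρ₁ h₁]; omega
  · simp only [hρ₂ h₂]; omega

theorem isRankFunction_fin_val (n : ℕ) : IsRankFunction (fun x : Fin n => (x : ℕ)) :=
  fun _ _ h => (Nat.covBy_iff_add_one_eq.mp (Fin.covBy_iff.mp h)).symm

theorem isSymmetricChain_finRange (r : ℕ) :
    IsSymmetricChain (fun x : Fin (r + 1) => (x : ℕ)) r (List.finRange (r + 1)) := by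
  refine ⟨by simp, ?_, 0, Fin.last r, ?_, ?_, by simp⟩
  · rw [List.isChain_iff_getElem]
    intro i hi
    simp [Fin.covBy_iff]
  · simp [List.finRange_succ]
  · simp [List.getLast?_eq_getElem?, Fin.last]

theorem isSCD_fin (r : ℕ) : IsSCD (fun x : Fin (r + 1) => (x : ℕ)) r {List.finRange (r + 1)} :=
  isSCD_iff.mpr ⟨fun q => ⟨_, ⟨Finset.mem_singleton_self _, List.mem_finRange q⟩, by simp⟩,
    by simpa using isSymmetricChain_finRange r⟩

theorem sum_val_consOrderIso {k : ℕ} (r : Fin (k + 1) → ℕ)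
    (p : Fin (r 0 + 1) × ∀ i : Fin k, Fin (r i.succ + 1)) :
    ∑ i, (Fin.consOrderIso (fun i => Fin (r i + 1)) p i : ℕ) = p.1 + ∑ i, (p.2 i : ℕ) := by
  simp [Fin.sum_univ_succ]

theorem isRankFunction_sum_val : ∀ {k : ℕ} (r : Fin k → ℕ),
    IsRankFunction (fun a : ∀ i, Fin (r i + 1) => ∑ i, (a i : ℕ))
  | 0, _ => fun a b h => absurd (Subsingleton.elim a b) h.lt.ne
  | _ + 1, r => by
    refine IsRankFunction.of_comp_orderIso (Fin.consOrderIso _) ?_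
    rw [Function.comp_def, funext (sum_val_consOrderIso r)]
    exact (isRankFunction_fin_val _).prod (isRankFunction_sum_val _)

theorem exists_isSCD_pi_fin : ∀ {k : ℕ} (r : Fin k → ℕ),
    ∃ S : Finset (List (∀ i, Fin (r i + 1))), IsSCD (fun a => ∑ i, (a i : ℕ)) (∑ i, r i) S
  | 0, _ => ⟨_, isSCD_of_unique (by simp)⟩
  | _ + 1, r => by
    classical
    obtain ⟨S, hS⟩ := exists_isSCD_pi_fin (fun i => r i.succ)
    refine ⟨_, IsSCD.of_comp_orderIso (Fin.consOrderIso fun i => Fin (r i + 1))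
      (S := productDecomposition {List.finRange (r 0 + 1)} S) ?_⟩
    rw [Function.comp_def, funext (sum_val_consOrderIso r), Fin.sum_univ_succ]
    exact (isSCD_fin (r 0)).prod (isRankFunction_fin_val _) (isRankFunction_sum_val _) hS

theorem stmt4_general {P₁ P₂ : Type} [PartialOrder P₁] [PartialOrder P₂]
    (ρ₁ : P₁ → ℕ) (ρ₂ : P₂ → ℕ) (n₁ n₂ : ℕ)
    (hcov₁ : ∀ x y : P₁, x ⋖ y → ρ₁ y = ρ₁ x + 1)
    (hcov₂ : ∀ x y : P₂, x ⋖ y → ρ₂ y = ρ₂ x + 1)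
    (h₁ : ∃ S, IsSCD ρ₁ n₁ S) (h₂ : ∃ S, IsSCD ρ₂ n₂ S) :
    (∃ S, IsSCD (fun p : P₁ × P₂ => ρ₁ p.1 + ρ₂ p.2) (n₁ + n₂) S) ∧
    (∀ (k : ℕ) (r : Fin k → ℕ),
      ∃ S : Finset (List (∀ i, Fin (r i + 1))),
        IsSCD (fun a => ∑ i, (a i : ℕ)) (∑ i, r i) S) := by
  refine ⟨?_, fun _ => exists_isSCD_pi_fin⟩
  classical
  obtain ⟨S₁, hS₁⟩ := h₁
  obtain ⟨S₂, hS₂⟩ := h₂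
  rcases isEmpty_or_nonempty P₁ with _ | ⟨⟨p₁⟩⟩
  · exact ⟨∅, isSCD_of_isEmpty _ _⟩
  rcases isEmpty_or_nonempty P₂ with _ | ⟨⟨p₂⟩⟩
  · exact ⟨∅, isSCD_of_isEmpty _ _⟩
  have : Inhabited P₁ := ⟨p₁⟩
  have : Inhabited P₂ := ⟨p₂⟩
  exact ⟨_, hS₁.prod hcov₁ hcov₂ hS₂⟩

/-- If two finite ranked posets admit symmetric chain decompositions, so does
their Cartesian product; in particular every finite product of chains admits one. -/
theorem stmt4 {P₁ P₂ : Type} [Fintype P₁] [Fintype P₂] [PartialOrder P₁] [PartialOrder P₂]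
    (ρ₁ : P₁ → ℕ) (ρ₂ : P₂ → ℕ) (n₁ n₂ : ℕ)
    (hcov₁ : ∀ x y : P₁, x ⋖ y → ρ₁ y = ρ₁ x + 1)
    (hcov₂ : ∀ x y : P₂, x ⋖ y → ρ₂ y = ρ₂ x + 1)
    (h₁ : ∃ S, IsSCD ρ₁ n₁ S) (h₂ : ∃ S, IsSCD ρ₂ n₂ S) :
    (∃ S, IsSCD (fun p : P₁ × P₂ => ρ₁ p.1 + ρ₂ p.2) (n₁ + n₂) S) ∧
    (∀ (k : ℕ) (r : Fin k → ℕ),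
      ∃ S : Finset (List (∀ i, Fin (r i + 1))),
        IsSCD (fun a => ∑ i, (a i : ℕ)) (∑ i, r i) S) :=
  stmt4_general ρ₁ ρ₂ n₁ n₂ hcov₁ hcov₂ h₁ h₂
end

section
/- For the product of chains P = C_{r_1} × C_{r_2} × ... × C_{r_n}, there exists a symmetric chain decomposition S whose set of initial elements is exactly { (a_1, ..., a_n) : 0 ≤ a_s ≤ r_s for all s, and a_s ≤ Σ_{i=s+1}^{n} (r_i - 2 a_i) for all s }. -/
lemma List.Nodup.getElem_mem_take_iff {α : Type*} {l : List α} (hnd : l.Nodup) {k s : ℕ}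
    (hk : k < l.length) : l[k] ∈ l.take s ↔ k < s := by
  rw [List.mem_take_iff_getElem]
  constructor
  · rintro ⟨i, hi, h⟩
    have := hnd.getElem_inj_iff.1 h
    omega
  · exact fun hks => ⟨k, by omega, rfl⟩

section CovByChain

variable {Q : Type} [PartialOrder Q]

lemma List.IsChain.nodup_of_covBy {l : List Q} (h : l.IsChain (· ⋖ ·)) : l.Nodup :=
  ((List.isChain_iff_pairwise.1 (h.imp fun _ _ hab => hab.lt)).imp ne_of_lt)

lemma List.IsChain.rank_getElem_of_covBy {ρ : Q → ℕ} (hρ : ∀ a b : Q, a ⋖ b → ρ b = ρ a + 1)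
    {l : List Q} (hl : l.IsChain (· ⋖ ·)) (k : ℕ) (hk : k < l.length) :
    ρ l[k] = ρ (l[0]'(Nat.zero_lt_of_lt hk)) + k := by
  induction k with
  | zero => rfl
  | succ k ih => rw [hρ _ _ (hl.getElem k hk), ih]; rfl

lemma List.isChain_covBy_finRange (r : ℕ) : (List.finRange r).IsChain (· ⋖ ·) := by
  rw [List.isChain_iff_getElem]
  intro i hi
  simp

lemma List.mem_drop_finRange {r s : ℕ} {y : Fin r} :
    y ∈ (List.finRange r).drop s ↔ s ≤ y := by
  rw [List.mem_iff_getElem]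
  constructor
  · rintro ⟨k, hk, rfl⟩
    simp
  · intro hs
    refine ⟨y - s, by simp only [List.length_drop, List.length_finRange]; omega, ?_⟩
    ext
    simp only [List.getElem_drop, List.getElem_finRange, Fin.cast_mk]
    omega

end CovByChain

section Hook

variable {Q : Type} {r : ℕ} {j : Fin (r + 1)} {l : List Q}

def hook (r : ℕ) (j : Fin (r + 1)) (l : List Q) : List (Fin (r + 1) × Q) :=
  if hj : j.val < l.length then
    (l.take (l.length - j)).map (j, ·) ++
      ((List.finRange (r + 1)).drop (j + 1)).map (·, l[l.length - 1 - j])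
  else []

lemma hook_of_lt (hj : j.val < l.length) :
    hook r j l = (l.take (l.length - j)).map (j, ·) ++
      ((List.finRange (r + 1)).drop (j + 1)).map (·, l[l.length - 1 - j]) :=
  dif_pos hj

lemma head?_hook (hj : j.val < l.length) : (hook r j l).head? = l.head?.map (j, ·) := by
  rw [hook_of_lt hj, List.head?_append, List.head?_map, List.head?_take, if_neg (by omega)]
  obtain ⟨x, t, rfl⟩ := List.exists_cons_of_length_pos (by omega : 0 < l.length)
  rfl

lemma hook_ne_nil (hj : j.val < l.length) : hook r j l ≠ [] := by
  intro h
  have hhead := head?_hook hj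
  rw [h, List.head?_nil, eq_comm, Option.map_eq_none_iff, List.head?_eq_none_iff] at hhead
  simp [hhead] at hj

lemma getLast?_take_length_sub (hj : j.val < l.length) :
    (l.take (l.length - j)).getLast? = some l[l.length - 1 - j] := by
  rw [List.getLast?_take, if_neg (show l.length - j ≠ 0 by omega),
    List.getElem?_eq_getElem (by omega)]
  simp only [Nat.sub_right_comm, Option.some_or]

lemma getLast?_finRange_succ : (List.finRange (r + 1)).getLast? = some (Fin.last r) := by
  simp [List.getLast?_eq_getElem?, Fin.last]

lemma getLast?_hook (hj : j.val < l.length) :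
    (hook r j l).getLast? = some (Fin.last r, l[l.length - 1 - j]) := by
  rw [hook_of_lt hj, List.getLast?_append, List.getLast?_map, List.getLast?_map,
    List.getLast?_drop, getLast?_take_length_sub hj]
  split_ifs with hjr
  · obtain rfl : j = Fin.last r := Fin.ext (by simp at hjr ⊢; omega)
    rfl
  · simp [getLast?_finRange_succ]

lemma mem_hook (hj : j.val < l.length) {p : Fin (r + 1) × Q} :
    p ∈ hook r j l ↔
      (p.1 = j ∧ p.2 ∈ l.take (l.length - j)) ∨ (j.val < p.1.val ∧ p.2 = l[l.length - 1 - j]) := by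
  obtain ⟨y, x⟩ := p
  simp only [hook_of_lt hj, List.mem_append, List.mem_map, Prod.mk.injEq, List.mem_drop_finRange]
  constructor
  · rintro (⟨x, hx, rfl, rfl⟩ | ⟨y, hy, rfl, rfl⟩)
    · exact Or.inl ⟨rfl, hx⟩
    · exact Or.inr ⟨hy, rfl⟩
  · rintro (⟨rfl, hx⟩ | ⟨hy, rfl⟩)
    · exact Or.inl ⟨x, hx, rfl, rfl⟩
    · exact Or.inr ⟨y, hy, rfl, rfl⟩

lemma mem_of_mem_hook {p : Fin (r + 1) × Q} (hp : p ∈ hook r j l) : p.2 ∈ l := by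
  by_cases hj : j.val < l.length
  · rcases (mem_hook hj).1 hp with ⟨-, h⟩ | ⟨-, h⟩
    · exact List.mem_of_mem_take h
    · exact h ▸ List.getElem_mem _
  · simp [hook, hj] at hp

lemma isChain_hook [PartialOrder Q] (hl : l.IsChain (· ⋖ ·)) : (hook r j l).IsChain (· ⋖ ·) := by
  unfold hook
  split_ifs with hj
  · refine List.IsChain.append ?_ ?_ ?_
    · exact (List.isChain_map _).2 ((hl.take _).imp fun _ _ h => Prod.mk_covBy_mk_iff_right.2 h)
    · exact (List.isChain_map _).2 (((List.isChain_covBy_finRange _).drop _).imp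
        fun _ _ h => Prod.mk_covBy_mk_iff_left.2 h)
    · intro x hx y hy
      rw [List.getLast?_map, getLast?_take_length_sub hj] at hx
      rw [List.head?_map, List.head?_drop] at hy
      simp only [Option.map_some, Option.mem_def, Option.some.injEq, Option.map_eq_some_iff]
        at hx hy
      obtain ⟨a, ha, rfl⟩ := hy
      obtain ⟨-, rfl⟩ := List.getElem?_eq_some_iff.1 ha
      exact hx ▸ Prod.mk_covBy_mk_iff_left.2 (by simp)
  · exact List.IsChain.nil

end Hook

section HookSCD

variable {Q : Type} {r : ℕ} {j : Fin (r + 1)} {l : List Q}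

lemma mem_hook_iff_val_eq_min (hnd : l.Nodup) {k : ℕ} (hk : k < l.length)
    (hj : j.val < l.length) {y : Fin (r + 1)} :
    (y, l[k]) ∈ hook r j l ↔ j.val = min y.val (l.length - 1 - k) := by
  rw [mem_hook hj]
  dsimp only
  rw [hnd.getElem_mem_take_iff hk, hnd.getElem_inj_iff, Fin.ext_iff]
  omega

variable [DecidableEq Q]

def hookSCD (r : ℕ) (S : Finset (List Q)) : Finset (List (Fin (r + 1) × Q)) :=
  ((S ×ˢ Finset.univ).filter fun x => x.2.val < x.1.length).image fun x => hook r x.2 x.1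

variable {S : Finset (List Q)}

lemma mem_hookSCD {l' : List (Fin (r + 1) × Q)} :
    l' ∈ hookSCD r S ↔ ∃ l ∈ S, ∃ j : Fin (r + 1), j.val < l.length ∧ hook r j l = l' := by
  simp [hookSCD, and_assoc]

lemma existsUnique_mem_hookSCD (hS : ∀ q, ∃! l, l ∈ S ∧ q ∈ l) (hnd : ∀ l ∈ S, l.Nodup)
    (p : Fin (r + 1) × Q) : ∃! l', l' ∈ hookSCD r S ∧ p ∈ l' := by
  obtain ⟨y, x⟩ := p
  obtain ⟨l, ⟨hlS, hxl⟩, hl_unique⟩ := hS x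
  obtain ⟨k, hk, rfl⟩ := List.mem_iff_getElem.1 hxl
  let j : Fin (r + 1) := ⟨min y.val (l.length - 1 - k), by omega⟩
  have hj : j.val < l.length := by simp only [j]; omega
  refine ⟨hook r j l, ⟨mem_hookSCD.2 ⟨l, hlS, j, hj, rfl⟩,
    (mem_hook_iff_val_eq_min (hnd l hlS) hk hj).2 rfl⟩, ?_⟩
  rintro _ ⟨hl', hmem⟩
  obtain ⟨l₂, hl₂S, j₂, hj₂, rfl⟩ := mem_hookSCD.1 hl'
  obtain rfl : l₂ = l := hl_unique l₂ ⟨hl₂S, mem_of_mem_hook hmem⟩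
  exact congrArg (hook r · l₂) (Fin.ext ((mem_hook_iff_val_eq_min (hnd l₂ hl₂S) hk hj₂).1 hmem))

end HookSCD

namespace IsSCD

variable {Q : Type} [PartialOrder Q] {ρ : Q → ℕ} {N : ℕ} {S : Finset (List Q)}

lemma two_mul_rank_head_add_length (hρ : ∀ a b : Q, a ⋖ b → ρ b = ρ a + 1) (hS : IsSCD ρ N S)
    {l : List Q} (hl : l ∈ S) {x : Q} (hx : l.head? = some x) : 2 * ρ x + l.length = N + 1 := by
  obtain ⟨hne, hchain, x', y, hx', hy, hxy⟩ := hS.2 l hl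
  obtain rfl : x' = x := Option.some.inj (hx'.symm.trans hx)
  have hpos : 0 < l.length := List.length_pos_iff.2 hne
  rw [List.head?_eq_getElem?, List.getElem?_eq_getElem hpos, Option.some.injEq] at hx
  rw [List.getLast?_eq_getElem?, List.getElem?_eq_getElem (by omega), Option.some.injEq] at hy
  have := hchain.rank_getElem_of_covBy hρ (l.length - 1) (by omega)
  rw [hy, hx] at this
  omega

lemma image_map {Q' : Type} [PartialOrder Q'] [DecidableEq Q'] (e : Q ≃o Q') {ρ : Q' → ℕ}
    (h : IsSCD (ρ ∘ e) N S) :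
    IsSCD ρ N (S.image (List.map e)) := by
  refine ⟨fun x => ?_, ?_⟩
  · obtain ⟨l, ⟨hl, hmem⟩, hl_unique⟩ := h.1 (e.symm x)
    refine ⟨l.map e, ⟨Finset.mem_image_of_mem _ hl, List.mem_map.2 ⟨_, hmem, by simp⟩⟩, ?_⟩
    rintro _ ⟨hl', hx⟩
    obtain ⟨l₂, hl₂, rfl⟩ := Finset.mem_image.1 hl'
    obtain ⟨a, ha, rfl⟩ := List.mem_map.1 hx
    rw [hl_unique l₂ ⟨hl₂, by simpa using ha⟩]
  · intro l' hl'
    obtain ⟨l, hl, rfl⟩ := Finset.mem_image.1 hl'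
    obtain ⟨hne, hchain, x, y, hx, hy, hxy⟩ := h.2 l hl
    refine ⟨by simpa using hne, ?_, e x, e y, by simp [hx], by simp [hy], hxy⟩
    exact (List.isChain_map _).2 (hchain.imp fun _ _ hab => (apply_covBy_apply_iff e).2 hab)

variable [DecidableEq Q]

lemma hookSCD (hρ : ∀ a b : Q, a ⋖ b → ρ b = ρ a + 1) (hS : IsSCD ρ N S) (r : ℕ) :
    IsSCD (fun p => p.1.val + ρ p.2) (r + N) (hookSCD r S) := by
  refine ⟨existsUnique_mem_hookSCD hS.1 fun l hl => (hS.2 l hl).2.1.nodup_of_covBy, ?_⟩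
  intro l' hl'
  obtain ⟨l, hlS, j, hj, rfl⟩ := mem_hookSCD.1 hl'
  obtain ⟨hne, hchain, -⟩ := hS.2 l hlS
  have hpos : 0 < l.length := List.length_pos_iff.2 hne
  have hhead : l.head? = some l[0] := List.head?_eq_getElem?.trans (List.getElem?_eq_getElem hpos)
  refine ⟨hook_ne_nil hj, isChain_hook hchain, (j, l[0]), (Fin.last r, l[l.length - 1 - j]),
    by rw [head?_hook hj, hhead]; rfl, getLast?_hook hj, ?_⟩
  have hlast := hchain.rank_getElem_of_covBy hρ (l.length - 1 - j) (by omega)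
  have hsymm := hS.two_mul_rank_head_add_length hρ hlS hhead
  simp only [Fin.val_last, hlast]
  omega

lemma exists_head?_eq_hookSCD_iff (hρ : ∀ a b : Q, a ⋖ b → ρ b = ρ a + 1) (hS : IsSCD ρ N S)
    {r : ℕ} (p : Fin (r + 1) × Q) :
    (∃ l ∈ _root_.hookSCD r S, l.head? = some p) ↔
      (∃ l ∈ S, l.head? = some p.2) ∧ p.1.val + 2 * ρ p.2 ≤ N := by
  obtain ⟨y, x⟩ := p
  dsimp only
  constructor
  · rintro ⟨l', hl', hhead⟩
    obtain ⟨l, hlS, j, hj, rfl⟩ := mem_hookSCD.1 hl'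
    rw [head?_hook hj, Option.map_eq_some_iff] at hhead
    obtain ⟨x, hx, hjx⟩ := hhead
    cases hjx
    have := hS.two_mul_rank_head_add_length hρ hlS hx
    exact ⟨⟨l, hlS, hx⟩, by omega⟩
  · rintro ⟨⟨l, hlS, hx⟩, hyx⟩
    have := hS.two_mul_rank_head_add_length hρ hlS hx
    have hy : y.val < l.length := by omega
    exact ⟨hook r y l, mem_hookSCD.2 ⟨l, hlS, y, hy, rfl⟩, by rw [head?_hook hy, hx]; rfl⟩

end IsSCD

lemma exists_head?_eq_image_map_iff {Q Q' : Type} [DecidableEq Q'] (e : Q ≃ Q')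
    (S : Finset (List Q)) (x : Q') :
    (∃ l ∈ S.image (List.map e), l.head? = some x) ↔ ∃ l ∈ S, l.head? = some (e.symm x) := by
  simp [List.head?_map, Option.map_eq_some_iff, ← e.eq_symm_apply]

lemma isSCD_singleton_default {Q : Type} [PartialOrder Q] [Unique Q] (ρ : Q → ℕ) :
    IsSCD ρ (2 * ρ default) {[default]} := by
  refine ⟨fun q => ⟨[default], by simp [Unique.eq_default q]⟩, fun l hl => ?_⟩
  obtain rfl := Finset.mem_singleton.1 hl
  exact ⟨List.cons_ne_nil _ _, List.isChain_singleton _, _, _, rfl, rfl, (two_mul _).symm⟩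

lemma sum_val_add_one_of_covBy {ι : Type*} [Fintype ι] {m : ι → ℕ} {a b : ∀ i, Fin (m i)}
    (h : a ⋖ b) : ∑ i, (b i : ℕ) = ∑ i, (a i : ℕ) + 1 := by
  classical
  obtain ⟨i, hi, heq⟩ := Pi.covBy_iff.1 h
  have hbi : (b i : ℕ) = a i + 1 := by simpa [eq_comm] using hi
  rw [← Finset.add_sum_erase _ _ (Finset.mem_univ i),
    ← Finset.add_sum_erase _ _ (Finset.mem_univ i),
    Finset.sum_congr rfl fun j hj => congrArg Fin.val (heq j (Finset.ne_of_mem_erase hj)).symm, hbi]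
  omega

lemma exists_isSCD_pi_fin_succ {n : ℕ} (r : Fin (n + 1) → ℕ)
    {S : Finset (List (∀ i : Fin n, Fin (r i.succ + 1)))}
    (hS : IsSCD (fun a => ∑ i, (a i : ℕ)) (∑ i : Fin n, r i.succ) S) :
    ∃ S' : Finset (List (∀ i, Fin (r i + 1))),
      IsSCD (fun a => ∑ i, (a i : ℕ)) (∑ i, r i) S' ∧
      ∀ a : ∀ i, Fin (r i + 1), (∃ l ∈ S', l.head? = some a) ↔
        (∃ l ∈ S, l.head? = some (Fin.tail a)) ∧
          (a 0 : ℕ) + 2 * ∑ i : Fin n, (a i.succ : ℕ) ≤ ∑ i : Fin n, r i.succ := by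
  let e := Fin.consOrderIso fun i => Fin (r i + 1)
  have hρ : ∀ a b : ∀ i : Fin n, Fin (r i.succ + 1), a ⋖ b →
      ∑ i, (b i : ℕ) = ∑ i, (a i : ℕ) + 1 := fun _ _ => sum_val_add_one_of_covBy
  refine ⟨(hookSCD (r 0) S).image (List.map e), IsSCD.image_map e ?_, fun a => ?_⟩
  · simpa [Function.comp_def, e, Fin.sum_univ_succ] using hS.hookSCD hρ (r 0)
  · exact (exists_head?_eq_image_map_iff e.toEquiv _ a).trans
      (IsSCD.exists_head?_eq_hookSCD_iff hρ hS _)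

/-- The product of chains `C_{r_1} × ⋯ × C_{r_n}` admits a symmetric chain
decomposition whose initial elements are exactly the tuples `(a_1, ..., a_n)` with
`a_s ≤ Σ_{i > s} (r_i - 2 a_i)` for all `s`. -/
theorem stmt5 (n : ℕ) (r : Fin n → ℕ) :
    ∃ S : Finset (List (∀ i, Fin (r i + 1))),
      IsSCD (fun a => ∑ i, (a i : ℕ)) (∑ i, r i) S ∧
      ∀ a : ∀ i, Fin (r i + 1),
        (∃ l ∈ S, l.head? = some a) ↔
          ∀ s : Fin n, (a s : ℤ) ≤ ∑ i ∈ Finset.Ioi s, ((r i : ℤ) - 2 * (a i : ℤ)) := by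
  induction n with
  | zero =>
    refine ⟨{[default]}, ?_, fun a => iff_of_true
      ⟨_, Finset.mem_singleton_self _, congrArg some (Subsingleton.elim _ _)⟩ fun s => s.elim0⟩
    convert isSCD_singleton_default (fun a : ∀ i : Fin 0, Fin (r i + 1) => ∑ i, (a i : ℕ))
    simp
  | succ n ih =>
    obtain ⟨S, hS, hheads⟩ := ih fun i => r i.succ
    obtain ⟨S', hS', hheads'⟩ := exists_isSCD_pi_fin_succ r hS
    refine ⟨S', hS', fun a => ?_⟩
    rw [hheads', hheads, Fin.forall_fin_succ, and_comm, Fin.sum_Ioi_zero]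
    simp only [Fin.sum_Ioi_succ, Fin.tail]
    refine and_congr ?_ Iff.rfl
    rw [Finset.sum_sub_distrib, ← Finset.mul_sum, ← Nat.cast_le (α := ℤ)]
    push_cast
    omega
end

section
/- Let P be a finite bounded weakly ranked poset with weak rank function ρ. Define SFY to be the set of monomials m = Π_{k=1}^{s} x_{p_k}^{ℓ_k} in variables indexed by P \ {0̂}, where 0̂ = p_0 < p_1 < ... < p_s < 1̂ is a chain in P and 1 ≤ ℓ_k ≤ min(ρ(p_k) - ρ(p_{k-1}) - 1, ρ(1̂) - ρ(p_k) - 2 Σ_{i=k+1}^{s} ℓ_i) for each k (the empty monomial 1 is included). Then SFY is a monomial order ideal: any monomial dividing an element of SFY also lies in SFY. -/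
/-- The rank gap `ρ(p_i) - ρ(p_{i-1})` along a chain `⊥ = p_0 < f 0 < f 1 < ⋯`
(where the predecessor of `f 0` is `⊥`, of rank `0`). -/
def gap {P : Type} [PartialOrder P] (ρ : P → ℕ) {s : ℕ} (f : Fin s → P) (i : Fin s) : ℕ :=
  ρ (f i) - (if (i : ℕ) = 0 then 0
    else ρ (f ⟨(i : ℕ) - 1, lt_of_le_of_lt (Nat.sub_le _ _) i.2⟩))

/-- The degree of a monomial. -/
def mdeg {σ : Type} (m : σ →₀ ℕ) : ℕ := m.sum fun _ e => e

/-- `m` is an SFY monomial for the weakly ranked bounded poset `P`: it is supported on a chain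
`⊥ = p_0 < p_1 < ⋯ < p_s < ⊤` with exponents `ℓ_k` satisfying
`1 ≤ ℓ_k ≤ min(ρ(p_k) - ρ(p_{k-1}) - 1, ρ(⊤) - ρ(p_k) - 2 Σ_{i>k} ℓ_i)`. -/
def IsSFY {P : Type} [PartialOrder P] [BoundedOrder P] (ρ : P → ℕ) (m : P →₀ ℕ) : Prop :=
  ∃ (s : ℕ) (f : Fin s → P) (ℓ : Fin s → ℕ),
    (∀ i j : Fin s, i < j → f i < f j) ∧ (∀ i, (⊥ : P) < f i) ∧ (∀ i, f i < (⊤ : P)) ∧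
    (∀ i, 1 ≤ ℓ i) ∧ (∀ i, ℓ i < gap ρ f i) ∧
    (∀ k : Fin s, (ℓ k : ℤ) + 2 * ∑ i ∈ Finset.univ.filter (fun j => k < j), (ℓ i : ℤ)
        ≤ (ρ ⊤ : ℤ) - (ρ (f k) : ℤ)) ∧
    m = ∑ i, Finsupp.single (f i) (ℓ i)

/-!
Dividing an SFY monomial lowers its exponents and deletes the chain elements whose exponent
drops to zero. On the surviving subchain the rank gaps `ρ(p_k) - ρ(p_{k-1})` can only grow,
because `ρ` is monotone and the new predecessor lies below the old one, while the tail sums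
`Σ_{i>k} ℓ_i` can only shrink; so both upper bounds on the exponents persist.
-/

open Finset

theorem Finsupp.sum_single_apply_of_injective {α ι M : Type*} [Fintype ι] [AddCommMonoid M]
    {f : ι → α} (hf : f.Injective) (ℓ : ι → M) (j : ι) :
    (∑ i, Finsupp.single (f i) (ℓ i)) (f j) = ℓ j := by
  classical
  simp [Finsupp.finsetSum_apply, Finsupp.single_apply, hf.eq_iff]

theorem Finsupp.eq_sum_single_of_le_sum_single {α ι : Type*} [Fintype ι] {f : ι → α}
    (hf : f.Injective) {ℓ : ι → ℕ} {m : α →₀ ℕ} (hm : m ≤ ∑ i, Finsupp.single (f i) (ℓ i)) :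
    m = ∑ i, Finsupp.single (f i) (m (f i)) := by
  ext x
  by_cases hx : x ∈ Set.range f
  · obtain ⟨j, rfl⟩ := hx
    rw [Finsupp.sum_single_apply_of_injective hf]
  · have hzero : ∀ ℓ : ι → ℕ, (∑ i, Finsupp.single (f i) (ℓ i)) x = 0 := fun ℓ => by
      rw [Finsupp.finsetSum_apply]
      exact sum_eq_zero fun i _ => Finsupp.single_eq_of_ne fun h => hx ⟨i, h.symm⟩
    rw [hzero]
    exact Nat.le_zero.mp (hzero ℓ ▸ hm x)

theorem Finset.sum_eq_sum_orderEmbOfFin {ι M : Type*} [Fintype ι] [LinearOrder ι]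
    [AddCommMonoid M] {S : Finset ι} {h : ι → M} (hS : ∀ i ∉ S, h i = 0) :
    ∑ i, h i = ∑ i : Fin S.card, h (S.orderEmbOfFin rfl i) := by
  rw [← sum_subset (subset_univ S) fun i _ hi => hS i hi]
  conv_lhs => rw [← map_orderEmbOfFin_univ S rfl, sum_map]
  rfl

theorem StrictMono.sum_Ioi_comp_le {s k : ℕ} {g : Fin k → Fin s} (hg : StrictMono g)
    (a : Fin s → ℕ) (j : Fin k) :
    ∑ i ∈ Ioi j, a (g i) ≤ ∑ i ∈ Ioi (g j), a i := by
  rw [← sum_image fun _ _ _ _ h => hg.injective h]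
  refine sum_le_sum_of_subset fun x hx => ?_
  obtain ⟨i, hi, rfl⟩ := mem_image.mp hx
  exact mem_Ioi.mpr (hg (mem_Ioi.mp hi))

structure IsSFYChain {P : Type} [PartialOrder P] [BoundedOrder P] (ρ : P → ℕ) {s : ℕ}
    (f : Fin s → P) (ℓ : Fin s → ℕ) : Prop where
  strictMono : StrictMono f
  bot_lt : ∀ i, ⊥ < f i
  lt_top : ∀ i, f i < ⊤
  one_le : ∀ i, 1 ≤ ℓ i
  lt_gap : ∀ i, ℓ i < gap ρ f i
  tail_bound : ∀ k : Fin s, (ℓ k : ℤ) + 2 * ∑ i ∈ univ.filter (fun j => k < j), (ℓ i : ℤ)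
      ≤ (ρ ⊤ : ℤ) - (ρ (f k) : ℤ)

theorem isSFY_iff {P : Type} [PartialOrder P] [BoundedOrder P] (ρ : P → ℕ) (m : P →₀ ℕ) :
    IsSFY ρ m ↔ ∃ (s : ℕ) (f : Fin s → P) (ℓ : Fin s → ℕ),
      IsSFYChain ρ f ℓ ∧ m = ∑ i, Finsupp.single (f i) (ℓ i) := by
  constructor
  · rintro ⟨s, f, ℓ, hf, hbot, htop, hone, hgap, htail, rfl⟩
    exact ⟨s, f, ℓ, ⟨fun i j h => hf i j h, hbot, htop, hone, hgap, htail⟩, rfl⟩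
  · rintro ⟨s, f, ℓ, hc, rfl⟩
    exact ⟨s, f, ℓ, fun i j h => hc.strictMono h, hc.bot_lt, hc.lt_top, hc.one_le, hc.lt_gap,
      hc.tail_bound, rfl⟩

theorem gap_le_gap_comp {P : Type} [PartialOrder P] {ρ : P → ℕ} {s k : ℕ} {f : Fin s → P}
    (hρf : Monotone (ρ ∘ f)) {g : Fin k → Fin s} (hg : StrictMono g) (i : Fin k) :
    gap ρ f (g i) ≤ gap ρ (f ∘ g) i := by
  unfold gap
  apply Nat.sub_le_sub_left
  by_cases hi : (i : ℕ) = 0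
  · simp [hi]
  · have hpred : g ⟨i - 1, by omega⟩ < g i := hg (Fin.mk_lt_mk.mpr (by omega))
    rw [if_neg hi, if_neg (by omega)]
    exact hρf (Fin.mk_le_mk.mpr (by omega))

theorem IsSFYChain.comp {P : Type} [PartialOrder P] [BoundedOrder P] {ρ : P → ℕ}
    (hρ : Monotone ρ) {s k : ℕ} {f : Fin s → P} {ℓ : Fin s → ℕ} (hc : IsSFYChain ρ f ℓ)
    {g : Fin k → Fin s} (hg : StrictMono g) {ℓ' : Fin k → ℕ} (hone : ∀ i, 1 ≤ ℓ' i)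
    (hle : ∀ i, ℓ' i ≤ ℓ (g i)) : IsSFYChain ρ (f ∘ g) ℓ' where
  strictMono := hc.strictMono.comp hg
  bot_lt i := hc.bot_lt (g i)
  lt_top i := hc.lt_top (g i)
  one_le := hone
  lt_gap i := (hle i).trans_lt <| (hc.lt_gap (g i)).trans_le <|
    gap_le_gap_comp (hρ.comp hc.strictMono.monotone) hg i
  tail_bound j := by
    have htail : ∑ i ∈ Ioi j, ℓ' i ≤ ∑ i ∈ Ioi (g j), ℓ i :=
      (sum_le_sum fun i _ => hle i).trans (hg.sum_Ioi_comp_le ℓ j)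
    have := hc.tail_bound (g j)
    simp only [filter_lt_eq_Ioi, Function.comp_apply] at this ⊢
    push_cast [← Nat.cast_sum] at this ⊢
    have := hle j
    omega

theorem stmt6_general {P : Type} [PartialOrder P] [BoundedOrder P]
    (ρ : P → ℕ) (hmono : ∀ x y : P, x < y → ρ x < ρ y)
    (m m' : P →₀ ℕ) (hm : IsSFY ρ m) (hdvd : m' ≤ m) :
    IsSFY ρ m' := by
  classical
  obtain ⟨s, f, ℓ, hc, rfl⟩ := (isSFY_iff ρ m).mp hm
  have hρ : Monotone ρ := StrictMono.monotone fun x y h => hmono x y h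
  have hle : ∀ i, m' (f i) ≤ ℓ i := fun i =>
    Finsupp.sum_single_apply_of_injective hc.strictMono.injective ℓ i ▸ hdvd (f i)
  set S := univ.filter fun i => m' (f i) ≠ 0
  have hone (i : Fin S.card) : 1 ≤ m' (f (S.orderEmbOfFin rfl i)) :=
    Nat.one_le_iff_ne_zero.mpr (mem_filter.mp (S.orderEmbOfFin_mem rfl i)).2
  refine (isSFY_iff ρ m').mpr ⟨S.card, f ∘ S.orderEmbOfFin rfl, _,
    hc.comp hρ (S.orderEmbOfFin rfl).strictMono hone fun i => hle _, ?_⟩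
  calc m' = ∑ i, Finsupp.single (f i) (m' (f i)) :=
        Finsupp.eq_sum_single_of_le_sum_single hc.strictMono.injective hdvd
    _ = _ := sum_eq_sum_orderEmbOfFin fun i hi => by simpa [S] using hi

/-- For a finite bounded weakly ranked poset `P`, the set `SFY` of monomials is
a monomial order ideal: any monomial dividing an element of `SFY` also lies in `SFY`. -/
theorem stmt6 {P : Type} [Fintype P] [PartialOrder P] [BoundedOrder P]
    (ρ : P → ℕ) (hmono : ∀ x y : P, x < y → ρ x < ρ y) (hbot : ρ ⊥ = 0)
    (m m' : P →₀ ℕ) (hm : IsSFY ρ m) (hdvd : m' ≤ m) :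
    IsSFY ρ m' :=
  stmt6_general ρ hmono m m' hm hdvd
end

section
/- Let P = C_n be the chain of rank n (so the only chains 0̂ < p_1 < ... < p_s < 1̂ are determined by ranks 0 < ρ(p_1) < ... < ρ(p_s) < n). Then every maximal monomial (under divisibility) of the monomial order ideal SFY associated to P has degree exactly ⌊(n-1)/2⌋; that is, SFY is a pure monomial order ideal of degree ⌊(n-1)/2⌋. -/
/-!
For a nonempty chain, the constraints at the first element give `ρ(p₁) ≥ ℓ₁ + 1` and
`ρ(p₁) + ℓ₁ + 2 ∑_{i>1} ℓᵢ ≤ n`, so every SFY monomial of `C_n` has `2 · deg + 1 ≤ n` (or is `1`).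
Conversely, if `2 · deg + 3 ≤ n`, the monomial can be multiplied by one more variable: working
above a baseline rank `b`, either the first gap is tight and we recurse on the rest of the chain
with baseline `ρ(p₁)`, or `ℓ₁` can be raised by one, or a new element of rank `b + 2` with
exponent `1` fits below `p₁`. Hence a maximal monomial has `n - 2 ≤ 2 · deg ≤ n - 1`.
-/

open Finset

lemma mdeg_eq_degree {σ : Type} (m : σ →₀ ℕ) : mdeg m = m.degree := rfl

lemma mdeg_sum_single {σ ι : Type} [Fintype ι] (f : ι → σ) (ℓ : ι → ℕ) :
    mdeg (∑ i, Finsupp.single (f i) (ℓ i)) = ∑ i, ℓ i := by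
  simp [mdeg_eq_degree, map_sum]

lemma gap_eq_sub_cons {P : Type} [PartialOrder P] (ρ : P → ℕ) {s : ℕ} (f : Fin s → P)
    (k : Fin s) : gap ρ f k = ρ (f k) - Fin.cons (α := fun _ => ℕ) 0 (ρ ∘ f) k.castSucc := by
  obtain ⟨_ | k, hk⟩ := k
  · simp [gap]
  · cases s with
    | zero => omega
    | succ s =>
      have : (⟨k + 1, hk⟩ : Fin (s + 1)).castSucc = (⟨k, by omega⟩ : Fin s).castSucc.succ := rfl
      rw [this, Fin.cons_succ]
      simp [gap]

/-- The SFY conditions for a chain `f 0 < ⋯ < f (s-1)` of `C_n` lying above an element of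
rank `b` (which plays the role of `p₀`); the chain being strict and below `1̂` follows. -/
def IsSFYChainAbove (n b : ℕ) {s : ℕ} (f : Fin s → Fin (n + 1)) (ℓ : Fin s → ℕ) : Prop :=
  ∀ k : Fin s, 1 ≤ ℓ k ∧
    Fin.cons (α := fun _ => ℕ) b (Fin.val ∘ f) k.castSucc + ℓ k < f k ∧
    (f k : ℕ) + ℓ k + 2 * ∑ i ∈ Ioi k, ℓ i ≤ n

namespace IsSFYChainAbove

variable {n b s : ℕ}

lemma of_isEmpty (f : Fin 0 → Fin (n + 1)) (ℓ : Fin 0 → ℕ) : IsSFYChainAbove n b f ℓ :=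
  fun k => k.elim0

lemma cons_iff {a : Fin (n + 1)} {c : ℕ} {f : Fin s → Fin (n + 1)} {ℓ : Fin s → ℕ} :
    IsSFYChainAbove n b (Fin.cons a f) (Fin.cons c ℓ) ↔
      (1 ≤ c ∧ b + c < a ∧ (a : ℕ) + c + 2 * ∑ i, ℓ i ≤ n) ∧ IsSFYChainAbove n a f ℓ := by
  simp [IsSFYChainAbove, Fin.forall_fin_succ, Fin.comp_cons]

lemma strictMono {f : Fin s → Fin (n + 1)} {ℓ : Fin s → ℕ} (h : IsSFYChainAbove n b f ℓ) :
    StrictMono f := by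
  cases s with
  | zero => exact fun i => i.elim0
  | succ s =>
    refine Fin.strictMono_iff_lt_succ.2 fun i => Fin.lt_def.2 ?_
    have hgap := (h i.succ).2.1
    rw [← Fin.succ_castSucc, Fin.cons_succ, Function.comp_apply] at hgap
    omega

lemma two_mul_sum_le {f : Fin s → Fin (n + 1)} {ℓ : Fin s → ℕ}
    (h : IsSFYChainAbove n b f ℓ) : 2 * ∑ i, ℓ i ≤ n - 1 - b := by
  cases s with
  | zero => simp
  | succ s =>
    obtain ⟨h1, hgap, hsum⟩ := h 0
    rw [Fin.castSucc_zero, Fin.cons_zero] at hgap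
    rw [Fin.sum_univ_succ, ← Fin.sum_Ioi_zero]
    omega

end IsSFYChainAbove

def IsSFYAbove (n b : ℕ) (m : Fin (n + 1) →₀ ℕ) : Prop :=
  ∃ (s : ℕ) (f : Fin s → Fin (n + 1)) (ℓ : Fin s → ℕ),
    IsSFYChainAbove n b f ℓ ∧ m = ∑ i, Finsupp.single (f i) (ℓ i)

lemma isSFY_iff_isSFYAbove_zero {n : ℕ} {m : Fin (n + 1) →₀ ℕ} :
    IsSFY (fun i : Fin (n + 1) => (i : ℕ)) m ↔ IsSFYAbove n 0 m := by
  simp only [IsSFY, IsSFYAbove, IsSFYChainAbove, gap_eq_sub_cons, Finset.filter_lt_eq_Ioi,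
    ← Nat.cast_sum, Fin.val_top, Nat.add_sub_cancel, Function.comp_def]
  refine exists_congr fun s => exists_congr fun f => exists_congr fun ℓ => ⟨?_, ?_⟩
  · rintro ⟨-, -, htop, h1, hgap, hsum, rfl⟩
    refine ⟨fun k => ⟨h1 k, ?_, ?_⟩, rfl⟩
    · have := hgap k
      have := h1 k
      omega
    · have := hsum k
      have := Fin.lt_def.1 (htop k)
      omega
  · rintro ⟨h, rfl⟩
    refine ⟨fun i j => (IsSFYChainAbove.strictMono h ·), fun k => ?_, fun k => ?_,
      fun k => (h k).1, fun k => ?_, fun k => ?_, rfl⟩ <;> obtain ⟨h1, hgap, hsum⟩ := h k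
    · exact Fin.lt_def.2 (show 0 < (f k : ℕ) by omega)
    · exact Fin.lt_def.2 (show (f k : ℕ) < n by omega)
    · omega
    · omega

theorem IsSFYChainAbove.exists_isSFYAbove_add_single {n : ℕ} :
    ∀ {s b : ℕ} {f : Fin s → Fin (n + 1)} {ℓ : Fin s → ℕ}, IsSFYChainAbove n b f ℓ →
      b + 2 * ∑ i, ℓ i + 3 ≤ n →
      ∃ q, IsSFYAbove n b ((∑ i, Finsupp.single (f i) (ℓ i)) + Finsupp.single q 1)
  | 0, b, f, ℓ, _, hroom => by
    rw [Fin.sum_univ_zero] at hroom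
    have hq : b + 2 < n + 1 := by omega
    exact ⟨⟨b + 2, hq⟩, 1, ![⟨b + 2, hq⟩], ![1],
      cons_iff.2 ⟨⟨le_rfl, by simp, by simp; omega⟩, .of_isEmpty _ _⟩, by simp⟩
  | s + 1, b, f, ℓ, h, hroom => by
    induction f using Fin.consCases with | cons a f =>
    induction ℓ using Fin.consCases with | cons c ℓ =>
    obtain ⟨⟨hc, hba, ha⟩, htail⟩ := cons_iff.1 h
    rw [Fin.sum_cons] at hroom
    simp only [Fin.sum_univ_succ, Fin.cons_zero, Fin.cons_succ]
    rcases (by omega : (a : ℕ) = b + c + 1 ∨ (a : ℕ) = b + c + 2 ∨ b + c + 3 ≤ a)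
      with htight | hbump | hinsert
    · obtain ⟨q, s', f', ℓ', h', heq⟩ := exists_isSFYAbove_add_single htail (by omega)
      have hsum' : ∑ i, ℓ' i = ∑ i, ℓ i + 1 := by
        simpa [mdeg_sum_single, mdeg_eq_degree] using (congrArg mdeg heq).symm
      refine ⟨q, s' + 1, Fin.cons a f', Fin.cons c ℓ', cons_iff.2 ⟨⟨hc, hba, by omega⟩, h'⟩, ?_⟩
      simp only [Fin.sum_univ_succ, Fin.cons_zero, Fin.cons_succ, ← heq, add_assoc]
    · refine ⟨a, s + 1, Fin.cons a f, Fin.cons (c + 1) ℓ,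
        cons_iff.2 ⟨⟨by omega, by omega, by omega⟩, htail⟩, ?_⟩
      simp only [Fin.sum_univ_succ, Fin.cons_zero, Fin.cons_succ, Finsupp.single_add]
      abel
    · have hq : b + 2 < n + 1 := by omega
      refine ⟨⟨b + 2, hq⟩, s + 2, Fin.cons ⟨b + 2, hq⟩ (Fin.cons a f), Fin.cons 1 (Fin.cons c ℓ),
        cons_iff.2 ⟨⟨le_rfl, by simp, ?_⟩, cons_iff.2 ⟨⟨hc, by simp; omega, ha⟩, htail⟩⟩, ?_⟩
      · simp only [Fin.sum_cons]
        omega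
      · simp only [Fin.sum_univ_succ, Fin.cons_zero, Fin.cons_succ]
        abel

/-- For the chain `C_n = {0, 1, ..., n}`, every maximal monomial (under
divisibility) of the monomial order ideal `SFY` has degree exactly `⌊(n-1)/2⌋`. -/
theorem stmt7 (n : ℕ) (m : Fin (n + 1) →₀ ℕ)
    (hm : IsSFY (fun i : Fin (n + 1) => (i : ℕ)) m)
    (hmax : ∀ m' : Fin (n + 1) →₀ ℕ, IsSFY (fun i : Fin (n + 1) => (i : ℕ)) m' → m ≤ m' → m' = m) :
    mdeg m = (n - 1) / 2 := by
  obtain ⟨s, f, ℓ, hchain, rfl⟩ := isSFY_iff_isSFYAbove_zero.1 hm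
  have hle := hchain.two_mul_sum_le
  have hfull : ¬ 2 * ∑ i, ℓ i + 3 ≤ n := by
    intro hroom
    obtain ⟨q, hq⟩ := hchain.exists_isSFYAbove_add_single (by omega)
    have := DFunLike.congr_fun (hmax _ (isSFY_iff_isSFYAbove_zero.2 hq) le_self_add) q
    simp at this
  rw [mdeg_sum_single]
  omega
end

section
/- Let P be a finite bounded weakly ranked poset of weak rank at most 6 whose Chow polynomial H_P(t) = Σ h_i t^i has coefficient sequence h that is palindromic, unimodal, and whose differential sequence Δh = (h_0, h_1 - h_0, h_2 - h_1) (of length at most 3, starting with h_0 = 1) is an O-sequence. Then h is log-concave. -/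
open scoped Classical in
/-- The (characteristic) Chow polynomial of a finite bounded weakly ranked poset. -/
noncomputable def chowPoly {P : Type} [Fintype P] [PartialOrder P] [BoundedOrder P]
    (ρ : P → ℕ) : Polynomial ℤ :=
  ∑ s ∈ Finset.range (Fintype.card P + 1),
    ∑ f ∈ Finset.univ.filter
        (fun f : Fin s → P => (∀ i j : Fin s, i < j → f i < f j) ∧ ∀ i, (⊥ : P) < f i),
      ∏ i : Fin s, ∑ j ∈ Finset.Ico 1 (gap ρ f i), (Polynomial.X : Polynomial ℤ) ^ j

/-! The coefficient sequence is `h 0, …, h d` with `d = n - 1 ≤ 5`, and `h 0 = 1` because the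
empty chain contributes `1` while every other chain contributes only positive powers of `t`.
Being palindromic and unimodal, `h` increases up to the middle and is nonnegative, and by symmetry
only the inequalities at `2 * i ≤ d` matter. When `i` is a middle index, `h i` dominates both
neighbours. Otherwise `i = 1` and `d ≥ 4`, and `h 2 ≤ h 1 ^ 2` follows from Macaulay's bound
`h 2 - h 1 ≤ C(h 1, 2)` for the order ideal realizing `Δh`. -/

section Monomial

open Finset Finsupp

theorem mdeg_single {σ : Type} (a : σ) (k : ℕ) : mdeg (single a k) = k :=
  sum_single_index rfl

theorem exists_eq_single_add_single_of_mdeg_eq_two {σ : Type} {m : σ →₀ ℕ} (hm : mdeg m = 2) :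
    ∃ a b, m = single a 1 + single b 1 := by
  classical
  obtain ⟨a, b, hab⟩ := Multiset.card_eq_two.1 ((card_toMultiset m).trans hm)
  refine ⟨a, b, ?_⟩
  rw [← Multiset.toFinsupp_eq_iff.2 hab.symm, Multiset.insert_eq_cons, ← Multiset.singleton_add,
    Multiset.toFinsupp_add, Multiset.toFinsupp_singleton, Multiset.toFinsupp_singleton]

/-- A degree-two monomial of an order ideal is a product of two variables that are themselves
degree-one monomials of the ideal. -/
theorem card_filter_mdeg_two_le {σ : Type} (M : Finset (σ →₀ ℕ))
    (hM : ∀ m ∈ M, ∀ m' : σ →₀ ℕ, m' ≤ m → m' ∈ M) :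
    #(M.filter fun m => mdeg m = 2) ≤ (#(M.filter fun m => mdeg m = 1) + 1).choose 2 := by
  classical
  let V : Finset σ := M.preimage (single · 1) (single_left_injective one_ne_zero).injOn
  let φ : Sym2 σ → σ →₀ ℕ :=
    Sym2.lift ⟨fun a b => single a 1 + single b 1, fun _ _ => add_comm _ _⟩
  have hV : #V ≤ #(M.filter fun m => mdeg m = 1) :=
    card_le_card_of_injOn (single · 1) (fun a ha => by simpa [V, mdeg_single] using ha)
      (single_left_injective one_ne_zero).injOn
  have hsub : M.filter (fun m => mdeg m = 2) ⊆ V.sym2.image φ := by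
    intro m hm
    obtain ⟨hmM, hm2⟩ := mem_filter.1 hm
    obtain ⟨a, b, rfl⟩ := exists_eq_single_add_single_of_mdeg_eq_two hm2
    refine mem_image.2 ⟨s(a, b), mk_mem_sym2_iff.2 ⟨?_, ?_⟩, rfl⟩
    · exact mem_preimage.2 (hM _ hmM _ le_self_add)
    · exact mem_preimage.2 (hM _ hmM _ le_add_self)
  calc #(M.filter fun m => mdeg m = 2) ≤ #(V.sym2.image φ) := card_le_card hsub
    _ ≤ #V.sym2 := card_image_le
    _ = (#V + 1).choose 2 := card_sym2 V
    _ ≤ _ := Nat.choose_le_choose 2 (by omega)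

theorem two_mul_card_filter_mdeg_two_le {σ : Type} (M : Finset (σ →₀ ℕ))
    (hM : ∀ m ∈ M, ∀ m' : σ →₀ ℕ, m' ≤ m → m' ∈ M) :
    2 * #(M.filter fun m => mdeg m = 2) ≤
      (#(M.filter fun m => mdeg m = 1) + 1) * #(M.filter fun m => mdeg m = 1) := by
  refine (Nat.mul_le_mul_left 2 (card_filter_mdeg_two_le M hM)).trans_eq ?_
  rw [Nat.choose_two_right, Nat.mul_div_cancel' (Nat.even_mul_pred_self _).two_dvd,
    Nat.add_sub_cancel]

end Monomial

theorem chowPoly_coeff_zero {P : Type} [Fintype P] [PartialOrder P] [BoundedOrder P]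
    (ρ : P → ℕ) : (chowPoly ρ).coeff 0 = 1 := by
  classical
  have hfactor (g : ℕ) : ∑ j ∈ Finset.Ico 1 g, (0 : ℤ) ^ j = 0 :=
    Finset.sum_eq_zero fun j hj => zero_pow (Nat.one_le_iff_ne_zero.1 (Finset.mem_Ico.1 hj).1)
  rw [Polynomial.coeff_zero_eq_eval_zero, chowPoly]
  simp [Polynomial.eval_finsetSum, Polynomial.eval_prod, hfactor, Finset.sum_range_succ']

section Unimodal

variable {α : Type*} {h : ℕ → α} {d : ℕ}

theorem apply_eq_apply_min_of_palindromic (hpal : ∀ i ≤ d, h i = h (d - i)) {k : ℕ}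
    (hk : k ≤ d) : h k = h (min k (d - k)) := by
  rcases le_total k (d - k) with hle | hle
  · rw [min_eq_left hle]
  · rw [min_eq_right hle, hpal k hk]

variable [Preorder α] (hpal : ∀ i ≤ d, h i = h (d - i))
  (huni : ∃ j ≤ d, (∀ a b, a ≤ b → b ≤ j → h a ≤ h b) ∧
    (∀ a b, j ≤ a → a ≤ b → b ≤ d → h b ≤ h a))
include hpal huni

/-- Past the mode `j`, reflect `a` to `d - a`, which lies beyond `b` on the decreasing side. -/
theorem le_of_palindromic_of_unimodal {a b : ℕ} (hab : a ≤ b) (hb : 2 * b ≤ d) :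
    h a ≤ h b := by
  obtain ⟨j, -, hinc, hdec⟩ := huni
  rcases le_total b j with hbj | hjb
  · exact hinc a b hab hbj
  · rw [hpal a (by omega)]
    exact hdec b (d - a) hjb (by omega) (by omega)

theorem le_apply_middle_of_palindromic_of_unimodal {i k : ℕ} (hk : k ≤ d)
    (hi : d ≤ 2 * i + 1) (hi' : 2 * i ≤ d + 1) : h k ≤ h i := by
  rw [apply_eq_apply_min_of_palindromic hpal hk,
    apply_eq_apply_min_of_palindromic hpal (k := i) (by omega)]
  exact le_of_palindromic_of_unimodal hpal huni (by omega) (by omega)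

theorem apply_zero_le_of_palindromic_of_unimodal {k : ℕ} (hk : k ≤ d) : h 0 ≤ h k := by
  rw [apply_eq_apply_min_of_palindromic hpal hk]
  exact le_of_palindromic_of_unimodal hpal huni (Nat.zero_le _) (by omega)

end Unimodal

theorem mul_le_sq_of_palindromic_of_lower_half {α : Type*} [CommMonoid α] [LE α]
    {h : ℕ → α} {d : ℕ} (hpal : ∀ i ≤ d, h i = h (d - i))
    (hlow : ∀ i, 1 ≤ i → 2 * i ≤ d → h (i - 1) * h (i + 1) ≤ h i ^ 2) :
    ∀ i, 1 ≤ i → i + 1 ≤ d → h (i - 1) * h (i + 1) ≤ h i ^ 2 := by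
  intro i hi hid
  rcases le_or_gt (2 * i) d with hlo | hhi
  · exact hlow i hi hlo
  · have := hlow (d - i) (by omega) (by omega)
    rwa [hpal (i - 1) (by omega), hpal (i + 1) (by omega), hpal i (by omega),
      show d - (i - 1) = d - i + 1 by omega, show d - (i + 1) = d - i - 1 by omega, mul_comm]

theorem mul_le_sq_of_palindromic_of_unimodal_of_le_five {h : ℕ → ℤ} {d : ℕ} (hd : d ≤ 5)
    (h0 : h 0 = 1) (hpal : ∀ i ≤ d, h i = h (d - i))
    (huni : ∃ j ≤ d, (∀ a b, a ≤ b → b ≤ j → h a ≤ h b) ∧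
      (∀ a b, j ≤ a → a ≤ b → b ≤ d → h b ≤ h a))
    (hmac : 4 ≤ d → 2 * (h 2 - h 1) ≤ (h 1 - h 0 + 1) * (h 1 - h 0)) :
    ∀ i, 1 ≤ i → i + 1 ≤ d → h (i - 1) * h (i + 1) ≤ h i ^ 2 := by
  refine mul_le_sq_of_palindromic_of_lower_half hpal fun i hi hid => ?_
  have hnonneg {k : ℕ} (hk : k ≤ d) : 0 ≤ h k := by
    linarith [apply_zero_le_of_palindromic_of_unimodal hpal huni hk]
  rcases le_or_gt d (2 * i + 1) with hmid | hend
  · have hlt := le_apply_middle_of_palindromic_of_unimodal hpal huni (k := i - 1) (by omega)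
      hmid (by omega)
    have hgt := le_apply_middle_of_palindromic_of_unimodal hpal huni (k := i + 1) (by omega)
      hmid (by omega)
    exact sq (h i) ▸ mul_le_mul hlt hgt (hnonneg (by omega)) (hnonneg (by omega))
  · obtain rfl : i = 1 := by omega
    have := hmac (by omega)
    rw [h0] at this ⊢
    nlinarith [Int.le_self_sq (h 1)]

theorem stmt10_general {P : Type} [Fintype P] [PartialOrder P] [BoundedOrder P]
    (n : ℕ) (ρ : P → ℕ)
    (hn : n ≤ 6)
    (h : ℕ → ℤ) (hh : ∀ k, h k = (chowPoly ρ).coeff k)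
    (hpal : ∀ i ≤ n - 1, h i = h (n - 1 - i))
    (huni : ∃ j ≤ n - 1, (∀ a b, a ≤ b → b ≤ j → h a ≤ h b) ∧
      (∀ a b, j ≤ a → a ≤ b → b ≤ n - 1 → h b ≤ h a))
    (hO : ∃ (σ : Type) (_ : DecidableEq σ) (M : Finset (σ →₀ ℕ)),
      (∀ m ∈ M, ∀ m' : σ →₀ ℕ, m' ≤ m → m' ∈ M) ∧
      ∀ i ≤ (n - 1) / 2,
        ((M.filter fun m => mdeg m = i).card : ℤ) = if i = 0 then h 0 else h i - h (i - 1)) :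
    ∀ i, 1 ≤ i → i + 1 ≤ n - 1 → h (i - 1) * h (i + 1) ≤ h i ^ 2 := by
  have h0 : h 0 = 1 := (hh 0).trans (chowPoly_coeff_zero ρ)
  refine mul_le_sq_of_palindromic_of_unimodal_of_le_five (by omega) h0 hpal huni fun hd => ?_
  obtain ⟨σ, -, M, hM, hcard⟩ := hO
  have h1 := hcard 1 (by omega)
  have h2 := hcard 2 (by omega)
  simp only [one_ne_zero, OfNat.ofNat_ne_zero, if_false, Nat.add_one_sub_one] at h1 h2
  rw [← h1, ← h2]
  exact_mod_cast two_mul_card_filter_mdeg_two_le M hM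

/-- Let `P` be a finite bounded weakly ranked poset of weak rank `n ≤ 6` whose
Chow polynomial has coefficient sequence `h` that is palindromic, unimodal, and whose
differential sequence `Δh = (h_0, h_1 - h_0, ..., h_{⌊(n-1)/2⌋} - h_{⌊(n-1)/2⌋-1})` is an
`O`-sequence (the `h`-vector of a monomial order ideal). Then `h` is log-concave. -/
theorem stmt10 {P : Type} [Fintype P] [PartialOrder P] [BoundedOrder P]
    (n : ℕ) (ρ : P → ℕ)
    (hmono : ∀ x y : P, x < y → ρ x < ρ y) (hbot : ρ ⊥ = 0) (htop : ρ ⊤ = n)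
    (hn : n ≤ 6)
    (h : ℕ → ℤ) (hh : ∀ k, h k = (chowPoly ρ).coeff k)
    (hpal : ∀ i ≤ n - 1, h i = h (n - 1 - i))
    (huni : ∃ j ≤ n - 1, (∀ a b, a ≤ b → b ≤ j → h a ≤ h b) ∧
      (∀ a b, j ≤ a → a ≤ b → b ≤ n - 1 → h b ≤ h a))
    (hO : ∃ (σ : Type) (_ : DecidableEq σ) (M : Finset (σ →₀ ℕ)),
      (∀ m ∈ M, ∀ m' : σ →₀ ℕ, m' ≤ m → m' ∈ M) ∧
      ∀ i ≤ (n - 1) / 2,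
        ((M.filter fun m => mdeg m = i).card : ℤ) = if i = 0 then h 0 else h i - h (i - 1)) :
    ∀ i, 1 ≤ i → i + 1 ≤ n - 1 → h (i - 1) * h (i + 1) ≤ h i ^ 2 :=
  stmt10_general n ρ hn h hh hpal huni hO
end

section
/- For a pure O-sequence (h_0, h_1, ..., h_e) (with h_0 = 1), one has h_i ≤ h_j whenever i ≤ j ≤ e - i. In particular, h_i ≤ h_{e-i} for i ≤ e/2, and h_0 ≤ h_1 ≤ ... ≤ h_{⌊e/2⌋}. -/
local infix:50 " ≤ₚ " => List.Forall₂ (· ≤ ·)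

namespace ChainProduct

/- A box `∏ₖ [0, L k]` is encoded by the list `L` of its bounds. `chainBase L n` is the bottom rank
of the symmetric chain through `n`, and `chainAt L n r` is the element of rank `r` on that chain. -/
def chainBase : List ℕ → List ℕ → ℕ
  | c :: L, u :: n => chainBase L n + min (n.sum - chainBase L n) (c - u)
  | _, _ => 0

/- If `n` lies on the chain `C` of `L` with bottom rank `k`, the grid `[0, c] × C` splits into
hooks: the `s`-th one runs from `(0, C_{k+s})` to `(c - s, C_{k+s})`, then up `C` to
`(c - s, C_top)`. -/
def chainAt : List ℕ → List ℕ → ℕ → List ℕ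
  | c :: L, u :: n, r =>
    let k := chainBase L n
    let s := min (n.sum - k) (c - u)
    if r - k ≤ c then (r - k - s) :: chainAt L n (k + s)
    else (c - s) :: chainAt L n (r - c + s)
  | _, _, _ => []

variable {L n : List ℕ} {c u r r' : ℕ}

theorem chainAt_cons_of_le (hr : r - chainBase L n ≤ c) :
    chainAt (c :: L) (u :: n) r =
      (r - chainBase L n - min (n.sum - chainBase L n) (c - u)) ::
        chainAt L n (chainBase L n + min (n.sum - chainBase L n) (c - u)) := by
  rw [chainAt, if_pos hr]

theorem chainAt_cons_of_lt (hr : c < r - chainBase L n) :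
    chainAt (c :: L) (u :: n) r =
      (c - min (n.sum - chainBase L n) (c - u)) ::
        chainAt L n (r - c + min (n.sum - chainBase L n) (c - u)) := by
  rw [chainAt, if_neg hr.not_ge]

theorem chainBase_le (h : n ≤ₚ L) : chainBase L n ≤ n.sum ∧ chainBase L n + n.sum ≤ L.sum := by
  induction h with
  | nil => simp [chainBase]
  | cons _ _ ih => simp only [chainBase, List.sum_cons]; omega

theorem chainAt_spec (h : n ≤ₚ L) (h₁ : chainBase L n ≤ r) (h₂ : chainBase L n + r ≤ L.sum) :
    chainAt L n r ≤ₚ L ∧ (chainAt L n r).sum = r ∧ chainBase L (chainAt L n r) = chainBase L n := by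
  induction h generalizing r with
  | nil => simp_all [chainBase, chainAt]
  | @cons u c n L hu hn ih =>
    have := chainBase_le hn
    simp only [chainBase, List.sum_cons] at h₁ h₂ ⊢
    by_cases hr : r - chainBase L n ≤ c
    · rw [chainAt_cons_of_le hr]
      obtain ⟨hle, hsum, hbase⟩ := ih (r := chainBase L n + min (n.sum - chainBase L n) (c - u))
        (by omega) (by omega)
      refine ⟨.cons (by omega) hle, ?_, ?_⟩
      · simp only [List.sum_cons, hsum]; omega
      · simp only [chainBase, hsum, hbase]; omega
    · rw [chainAt_cons_of_lt (by omega)]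
      obtain ⟨hle, hsum, hbase⟩ := ih (r := r - c + min (n.sum - chainBase L n) (c - u))
        (by omega) (by omega)
      refine ⟨.cons (by omega) hle, ?_, ?_⟩
      · simp only [List.sum_cons, hsum]; omega
      · simp only [chainBase, hsum, hbase]; omega

theorem chainAt_sum (h : n ≤ₚ L) : chainAt L n n.sum = n := by
  induction h with
  | nil => simp [chainAt]
  | @cons u c n L hu hn ih =>
    have := chainBase_le hn
    rw [List.sum_cons]
    by_cases hr : u + n.sum - chainBase L n ≤ c
    · rw [chainAt_cons_of_le hr,
        show chainBase L n + min (n.sum - chainBase L n) (c - u) = n.sum by omega, ih,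
        show u + n.sum - chainBase L n - min (n.sum - chainBase L n) (c - u) = u by omega]
    · rw [chainAt_cons_of_lt (by omega),
        show u + n.sum - c + min (n.sum - chainBase L n) (c - u) = n.sum by omega, ih,
        show c - min (n.sum - chainBase L n) (c - u) = u by omega]

theorem chainAt_chainAt (h : n ≤ₚ L) (h₁ : chainBase L n ≤ r) (h₂ : chainBase L n + r ≤ L.sum)
    (h₁' : chainBase L n ≤ r') (h₂' : chainBase L n + r' ≤ L.sum) :
    chainAt L (chainAt L n r) r' = chainAt L n r' := by
  induction h generalizing r r' with
  | nil => simp [chainAt]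
  | @cons u c n L hu hn ih =>
    have := chainBase_le hn
    simp only [chainBase, List.sum_cons] at h₁ h₂ h₁' h₂'
    set k := chainBase L n
    set s := min (n.sum - k) (c - u)
    -- `chainAt (c :: L) (u :: n) r` lies on the same hook: it has the same `k` and `s`
    obtain ⟨a, t, hrt, ht₁, ht₂, hs⟩ : ∃ a t, chainAt (c :: L) (u :: n) r = a :: chainAt L n t ∧
        k ≤ t ∧ k + t ≤ L.sum ∧ min ((chainAt L n t).sum - k) (c - a) = s := by
      by_cases hr : r - k ≤ c
      · refine ⟨_, _, chainAt_cons_of_le hr, by omega, by omega, ?_⟩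
        rw [(chainAt_spec hn (r := k + s) (by omega) (by omega)).2.1]
        omega
      · refine ⟨_, _, chainAt_cons_of_lt (by omega), by omega, by omega, ?_⟩
        rw [(chainAt_spec hn (r := r - c + s) (by omega) (by omega)).2.1]
        omega
    have hbase : chainBase L (chainAt L n t) = k := (chainAt_spec hn ht₁ ht₂).2.2
    rw [hrt]
    by_cases hr' : r' - k ≤ c
    · rw [chainAt_cons_of_le (by rwa [hbase]), chainAt_cons_of_le hr', hbase, hs,
        ih ht₁ ht₂ (by omega) (by omega)]
    · rw [chainAt_cons_of_lt (by rw [hbase]; omega), chainAt_cons_of_lt (by omega), hbase, hs,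
        ih ht₁ ht₂ (by omega) (by omega)]

theorem chainAt_mono (h : n ≤ₚ L) (h₁ : chainBase L n ≤ r) (hr : r ≤ r')
    (h₂ : chainBase L n + r' ≤ L.sum) : chainAt L n r ≤ₚ chainAt L n r' := by
  induction h generalizing r r' with
  | nil => simp [chainAt]
  | @cons u c n L hu hn ih =>
    have := chainBase_le hn
    simp only [chainBase, List.sum_cons] at h₁ h₂
    simp only [chainAt]
    split_ifs
    · exact .cons (by omega) (List.forall₂_same.2 fun _ _ => le_rfl)
    · exact .cons (by omega) (ih (by omega) (by omega) (by omega))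
    · omega
    · exact .cons (by omega) (ih (by omega) (by omega) (by omega))

theorem le_chainAt (h : n ≤ₚ L) (hr : n.sum ≤ r) (hrL : n.sum + r ≤ L.sum) :
    n ≤ₚ chainAt L n r := by
  have hb := chainBase_le h
  simpa only [chainAt_sum h] using chainAt_mono h hb.1 hr (by omega)

theorem eq_of_chainAt_eq {n' : List ℕ} (h : n ≤ₚ L) (h' : n' ≤ₚ L) (hsum : n.sum = n'.sum)
    (hr : n.sum ≤ r) (hrL : n.sum + r ≤ L.sum) (heq : chainAt L n r = chainAt L n' r) : n = n' := by
  have hb := chainBase_le h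
  have hb' := chainBase_le h'
  calc n = chainAt L (chainAt L n r) n.sum := by
        rw [chainAt_chainAt h (by omega) (by omega) hb.1 hb.2, chainAt_sum h]
    _ = chainAt L (chainAt L n' r) n'.sum := by rw [heq, hsum]
    _ = n' := by rw [chainAt_chainAt h' (by omega) (by omega) hb'.1 hb'.2, chainAt_sum h']

end ChainProduct

namespace Finsupp

open ChainProduct

variable {σ : Type*}

noncomputable def ofList : List σ → List ℕ → σ →₀ ℕ
  | v :: vs, c :: cs => (ofList vs cs).update v c
  | _, _ => 0

theorem ofList_map_apply [DecidableEq σ] (vs : List σ) (n : σ →₀ ℕ) (x : σ) :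
    ofList vs (vs.map n) x = if x ∈ vs then n x else 0 := by
  induction vs with
  | nil => simp [ofList]
  | cons v vs ih =>
    simp only [List.map_cons, ofList, update_apply, ih, List.mem_cons]
    split_ifs <;> simp_all

theorem ofList_map {vs : List σ} {n : σ →₀ ℕ} (hn : ∀ x ∉ vs, n x = 0) :
    ofList vs (vs.map n) = n := by
  classical
  ext x
  rw [ofList_map_apply]
  split_ifs with hx
  · rfl
  · exact (hn x hx).symm

theorem map_ofList {vs : List σ} (hvs : vs.Nodup) {cs : List ℕ} (hcs : cs.length = vs.length) :
    vs.map (ofList vs cs) = cs := by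
  classical
  induction vs generalizing cs with
  | nil => simp_all
  | cons v vs ih =>
    obtain _ | ⟨c, cs⟩ := cs
    · simp at hcs
    rw [List.nodup_cons] at hvs
    simp only [ofList, List.map_cons, update_apply, if_pos, List.cons.injEq, true_and]
    rw [coe_update,
      List.map_congr_left fun x hx => Function.update_of_ne (ne_of_mem_of_not_mem hx hvs.1) _ _]
    exact ih hvs.2 (by simpa using hcs)

theorem ofList_mono (vs : List σ) {cs cs' : List ℕ} (h : cs ≤ₚ cs') :
    ofList vs cs ≤ ofList vs cs' := by
  classical
  induction h generalizing vs with
  | nil => cases vs <;> rfl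
  | cons hc _ ih =>
    obtain _ | ⟨v, vs⟩ := vs
    · rfl
    intro x
    simp only [ofList, update_apply]
    split_ifs
    · exact hc
    · exact ih vs x

theorem degree_eq_sum_map {vs : List σ} (hvs : vs.Nodup) {n : σ →₀ ℕ} (hn : ∀ x ∉ vs, n x = 0) :
    n.degree = (vs.map n).sum := by
  classical
  rw [← List.sum_toFinset _ hvs, degree_apply]
  refine Finset.sum_subset (fun x hx => ?_) fun x _ hx => notMem_support_iff.1 hx
  exact List.mem_toFinset.2 (not_not.1 fun h => mem_support_iff.1 hx (hn x h))

theorem map_le_map {vs : List σ} {n F : σ →₀ ℕ} (h : n ≤ F) : vs.map n ≤ₚ vs.map F := by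
  rw [List.forall₂_map_left_iff, List.forall₂_map_right_iff, List.forall₂_same]
  exact fun x _ => h x

theorem exists_matching_Iic (F : σ →₀ ℕ) {i j : ℕ} (hij : i ≤ j) (hijF : i + j ≤ F.degree) :
    ∃ Ψ : (σ →₀ ℕ) → σ →₀ ℕ,
      (∀ n ≤ F, n.degree = i → n ≤ Ψ n ∧ Ψ n ≤ F ∧ (Ψ n).degree = j) ∧
      Set.InjOn Ψ {n | n ≤ F ∧ n.degree = i} := by
  obtain ⟨vs, hvs, hF⟩ : ∃ vs : List σ, vs.Nodup ∧ ∀ x ∉ vs, F x = 0 :=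
    ⟨F.support.toList, F.support.nodup_toList,
      fun x hx => notMem_support_iff.1 (mt Finset.mem_toList.2 hx)⟩
  have hvanish : ∀ n ≤ F, ∀ x ∉ vs, n x = 0 :=
    fun n hn x hx => Nat.eq_zero_of_le_zero ((hn x).trans_eq (hF x hx))
  have hL : (vs.map F).sum = F.degree := (degree_eq_sum_map hvs hF).symm
  have hchain : ∀ n ≤ F, n.degree = i →
      vs.map n ≤ₚ chainAt (vs.map F) (vs.map n) j ∧ chainAt (vs.map F) (vs.map n) j ≤ₚ vs.map F ∧
        (chainAt (vs.map F) (vs.map n) j).sum = j := by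
    intro n hn hdeg
    have hc := map_le_map (vs := vs) hn
    have hsum : (vs.map n).sum = i := (degree_eq_sum_map hvs (hvanish n hn)).symm.trans hdeg
    have hb := chainBase_le hc
    obtain ⟨hle, hsum', -⟩ := chainAt_spec hc (r := j) (by omega) (by omega)
    exact ⟨le_chainAt hc (by omega) (by omega), hle, hsum'⟩
  have hmap : ∀ n ≤ F, n.degree = i →
      vs.map (ofList vs (chainAt (vs.map F) (vs.map n) j)) = chainAt (vs.map F) (vs.map n) j :=
    fun n hn hdeg => map_ofList hvs (by rw [(hchain n hn hdeg).2.1.length_eq, List.length_map])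
  refine ⟨fun n => ofList vs (chainAt (vs.map F) (vs.map n) j), fun n hn hdeg => ?_, ?_⟩
  · obtain ⟨hup, hbox, hsum⟩ := hchain n hn hdeg
    have hΨF : ofList vs (chainAt (vs.map F) (vs.map n) j) ≤ F :=
      (ofList_mono vs hbox).trans_eq (ofList_map hF)
    refine ⟨(ofList_map (hvanish n hn)).ge.trans (ofList_mono vs hup), hΨF, ?_⟩
    rw [degree_eq_sum_map hvs (hvanish _ hΨF), hmap n hn hdeg, hsum]
  · rintro n ⟨hn, hdeg⟩ n' ⟨hn', hdeg'⟩ heq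
    have hsum : (vs.map n).sum = i := (degree_eq_sum_map hvs (hvanish n hn)).symm.trans hdeg
    have hsum' : (vs.map n').sum = i := (degree_eq_sum_map hvs (hvanish n' hn')).symm.trans hdeg'
    have hcoords : vs.map n = vs.map n' :=
      eq_of_chainAt_eq (map_le_map hn) (map_le_map hn') (hsum.trans hsum'.symm) (r := j)
        (by omega) (by omega)
        (by rw [← hmap n hn hdeg, ← hmap n' hn' hdeg']
            exact congrArg (fun m : σ →₀ ℕ => vs.map m) heq)
    rw [← ofList_map (hvanish n hn), ← ofList_map (hvanish n' hn'), hcoords]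

end Finsupp

open Finset

namespace MonomialOrderIdeal

variable {σ : Type*}

noncomputable def level (M : Finset (σ →₀ ℕ)) (d : ℕ) : Finset (σ →₀ ℕ) := M.filter (·.degree = d)

theorem card_level_le_of_upper_in_Iic {F : σ →₀ ℕ} {U : Finset (σ →₀ ℕ)}
    (hUF : ∀ n ∈ U, n ≤ F) (hU : ∀ n ∈ U, ∀ y ≤ F, n ≤ y → y ∈ U) {i j : ℕ} (hij : i ≤ j)
    (hijF : i + j ≤ F.degree) : #(level U i) ≤ #(level U j) := by
  obtain ⟨Ψ, hΨ, hinj⟩ := Finsupp.exists_matching_Iic F hij hijF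
  refine card_le_card_of_injOn Ψ (fun n hn => ?_) fun n hn n' hn' => ?_
  · obtain ⟨hnU, hdeg⟩ := mem_filter.1 hn
    obtain ⟨hup, hΨF, hΨdeg⟩ := hΨ n (hUF n hnU) hdeg
    exact mem_filter.2 ⟨hU n hnU _ hΨF hup, hΨdeg⟩
  · have hn := mem_filter.1 hn
    have hn' := mem_filter.1 hn'
    exact hinj ⟨hUF n hn.1, hn.2⟩ ⟨hUF n' hn'.1, hn'.2⟩

theorem card_level_filter_add_card_level_filter_not (M : Finset (σ →₀ ℕ)) (p : (σ →₀ ℕ) → Prop)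
    [DecidablePred p] (d : ℕ) :
    #(level (M.filter p) d) + #(level (M.filter (¬ p ·)) d) = #(level M d) := by
  rw [level, level, filter_comm, filter_comm (¬ p ·)]
  exact card_filter_add_card_filter_not p

structure IsPure (M : Finset (σ →₀ ℕ)) (e : ℕ) : Prop where
  isLowerSet : IsLowerSet (M : Set (σ →₀ ℕ))
  degree_eq : ∀ m, Maximal (· ∈ M) m → m.degree = e

def UnderOtherFacet (M : Finset (σ →₀ ℕ)) (F m : σ →₀ ℕ) : Prop :=
  ∃ G, Maximal (· ∈ M) G ∧ G ≠ F ∧ m ≤ G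

variable {M : Finset (σ →₀ ℕ)} {F : σ →₀ ℕ} {e : ℕ}

open Classical in
theorem filter_underOtherFacet_ssubset (hF : Maximal (· ∈ M) F) :
    M.filter (UnderOtherFacet M F) ⊂ M := by
  refine (ssubset_iff_of_subset (filter_subset _ _)).2 ⟨F, hF.1, fun hF' => ?_⟩
  obtain ⟨G, hG, hGF, hFG⟩ := (mem_filter.1 hF').2
  exact hGF (le_antisymm (hF.2 hG.1 hFG) hFG)

open Classical in
theorem IsPure.filter_underOtherFacet (hM : IsPure M e) :
    IsPure (M.filter (UnderOtherFacet M F)) e where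
  isLowerSet a b hba ha := by
    obtain ⟨haM, G, hG, hGF, haG⟩ := mem_filter.1 ha
    exact mem_filter.2 ⟨hM.isLowerSet hba haM, G, hG, hGF, hba.trans haG⟩
  degree_eq m hm := by
    obtain ⟨-, G, hG, hGF, hmG⟩ := mem_filter.1 hm.1
    obtain rfl : m = G := hm.eq_of_le (mem_filter.2 ⟨hG.1, G, hG, hGF, le_rfl⟩) hmG
    exact hM.degree_eq m hG

theorem le_of_not_underOtherFacet {n : σ →₀ ℕ} (hn : n ∈ M) (hn' : ¬ UnderOtherFacet M F n) :
    n ≤ F := by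
  obtain ⟨G, hnG, hG⟩ := M.exists_le_maximal hn
  obtain rfl : G = F := by_contra fun hGF => hn' ⟨G, hG, hGF, hnG⟩
  exact hnG

theorem not_underOtherFacet_of_le {n y : σ →₀ ℕ} (hn : ¬ UnderOtherFacet M F n) (hny : n ≤ y) :
    ¬ UnderOtherFacet M F y :=
  fun ⟨G, hG, hGF, hyG⟩ => hn ⟨G, hG, hGF, hny.trans hyG⟩

theorem IsPure.card_level_le (hM : IsPure M e) {i j : ℕ} (hij : i ≤ j) (hije : i + j ≤ e) :
    #(level M i) ≤ #(level M j) := by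
  classical
  induction M using Finset.strongInduction with
  | H M ih =>
  obtain rfl | ⟨m, hm⟩ := M.eq_empty_or_nonempty
  · simp [level]
  obtain ⟨F, -, hF⟩ := M.exists_le_maximal hm
  have hrest := ih _ (filter_underOtherFacet_ssubset hF) hM.filter_underOtherFacet
  have hfacet : #(level (M.filter (¬ UnderOtherFacet M F ·)) i) ≤
      #(level (M.filter (¬ UnderOtherFacet M F ·)) j) := by
    refine card_level_le_of_upper_in_Iic (F := F) (fun n hn => ?_) (fun n hn y hyF hny => ?_)
      hij (hM.degree_eq F hF ▸ hije)
    · exact le_of_not_underOtherFacet (mem_filter.1 hn).1 (mem_filter.1 hn).2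
    · exact mem_filter.2 ⟨hM.isLowerSet hyF hF.1, not_underOtherFacet_of_le (mem_filter.1 hn).2 hny⟩
  rw [← card_level_filter_add_card_level_filter_not M (UnderOtherFacet M F) i,
    ← card_level_filter_add_card_level_filter_not M (UnderOtherFacet M F) j]
  omega

end MonomialOrderIdeal

theorem stmt13_general {σ : Type} (M : Finset (σ →₀ ℕ)) (e : ℕ)
    (hdown : ∀ m ∈ M, ∀ m' : σ →₀ ℕ, m' ≤ m → m' ∈ M)
    (hpure : ∀ m ∈ M, (∀ m' ∈ M, m ≤ m' → m' = m) → mdeg m = e)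
    (h : ℕ → ℕ) (hh : ∀ i, h i = (M.filter fun m => mdeg m = i).card) :
    (∀ i j, i ≤ j → i + j ≤ e → h i ≤ h j) ∧
    (∀ i, 2 * i ≤ e → h i ≤ h (e - i)) ∧
    (∀ i, 1 ≤ i → i ≤ e / 2 → h (i - 1) ≤ h i) := by
  have hM : MonomialOrderIdeal.IsPure M e :=
    ⟨fun a b hba ha => hdown a ha b hba,
      fun m hm => hpure m hm.1 fun m' hm' hle => le_antisymm (hm.2 hm' hle) hle⟩
  have key : ∀ i j, i ≤ j → i + j ≤ e → h i ≤ h j := fun i j hij hije => by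
    rw [hh, hh]
    exact hM.card_level_le hij hije
  exact ⟨key, fun i hi => key i (e - i) (by omega) (by omega),
    fun i hi₁ hi₂ => key (i - 1) i (by omega) (by omega)⟩

/-- **Hibi.** For a pure `O`-sequence `(h_0, ..., h_e)` one has `h_i ≤ h_j`
whenever `i ≤ j ≤ e - i`; in particular `h_i ≤ h_{e-i}` for `i ≤ e/2` and
`h_0 ≤ h_1 ≤ ⋯ ≤ h_{⌊e/2⌋}`. -/
theorem stmt13 {σ : Type} [DecidableEq σ] (M : Finset (σ →₀ ℕ)) (e : ℕ)
    (hdown : ∀ m ∈ M, ∀ m' : σ →₀ ℕ, m' ≤ m → m' ∈ M)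
    (hpure : ∀ m ∈ M, (∀ m' ∈ M, m ≤ m' → m' = m) → mdeg m = e)
    (h : ℕ → ℕ) (hh : ∀ i, h i = (M.filter fun m => mdeg m = i).card) :
    (∀ i j, i ≤ j → i + j ≤ e → h i ≤ h j) ∧
    (∀ i, 2 * i ≤ e → h i ≤ h (e - i)) ∧
    (∀ i, 1 ≤ i → i ≤ e / 2 → h (i - 1) ≤ h i) :=
  stmt13_general M e hdown hpure h hh
end

section
/- In the monomial order ideal SFY for a chain C_n, the number of monomials of degree k equals h_k - h_{k-1} for 1 ≤ k ≤ ⌊(n-1)/2⌋ and equals 1 for k = 0, where h_k are the coefficients of the Chow polynomial of C_n (with h_{-1} = 0). That is, the h-vector of SFY equals the differential sequence Δh of the coefficients of H_{C_n}(t). -/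
namespace ChowChain

open Finset

/-! ### Runs of a set of naturals -/

def runLength (T : Finset ℕ) : ℕ → ℕ
  | 0 => 0
  | x + 1 => if x ∈ T then runLength T x + 1 else 0

lemma runLength_le (T : Finset ℕ) : ∀ x, runLength T x ≤ x
  | 0 => le_rfl
  | x + 1 => by
    unfold runLength
    split_ifs
    · exact Nat.succ_le_succ (runLength_le T x)
    · exact Nat.zero_le _

lemma le_runLength_iff (T : Finset ℕ) {x k : ℕ} (hk : k ≤ x) :
    k ≤ runLength T x ↔ Ico (x - k) x ⊆ T := by
  induction x generalizing k with
  | zero => simp_all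
  | succ x ih =>
    rcases k with _ | k
    · simp
    unfold runLength
    split_ifs with hx
    · rw [Nat.add_le_add_iff_right, ih (by omega), Nat.add_sub_add_right,
        ← insert_Ico_right_eq_Ico_add_one (by omega), insert_subset_iff]
      exact ⟨fun h => ⟨hx, h⟩, fun h => h.2⟩
    · simp only [nonpos_iff_eq_zero, Nat.add_one_ne_zero, false_iff]
      exact fun h => hx (h (mem_Ico.2 ⟨by omega, by omega⟩))

lemma Ico_runLength_subset (T : Finset ℕ) (x : ℕ) : Ico (x - runLength T x) x ⊆ T :=
  (le_runLength_iff T (runLength_le T x)).1 le_rfl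

lemma runLength_eq {T : Finset ℕ} {x r : ℕ} (hr : r ≤ x) (hrun : Ico (x - r) x ⊆ T)
    (hend : x - r = 0 ∨ x - r - 1 ∉ T) : runLength T x = r := by
  refine le_antisymm (not_lt.1 fun hlt => ?_) ((le_runLength_iff T hr).2 hrun)
  have := runLength_le T x
  have hsub := (le_runLength_iff T (k := r + 1) (by omega)).1 hlt
  exact hend.elim (by omega) fun h => h (hsub (mem_Ico.2 ⟨by omega, by omega⟩))

lemma runLength_ne_zero_iff {T : Finset ℕ} {x : ℕ} :
    runLength T x ≠ 0 ↔ 1 ≤ x ∧ x - 1 ∈ T := by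
  rcases x with _ | x
  · simp [runLength]
  · rw [← Nat.one_le_iff_ne_zero, le_runLength_iff T (by omega)]
    simp

/-! ### Ballot sets -/

def IsBallot (m : ℕ) (T : Finset ℕ) : Prop :=
  ∀ x ∈ T, x + 2 * #{y ∈ T | x < y} ≤ m

lemma IsBallot.le {m : ℕ} {T : Finset ℕ} (hT : IsBallot m T) {x : ℕ} (hx : x ∈ T) : x ≤ m :=
  (Nat.le_add_right _ _).trans (hT x hx)

instance (m : ℕ) : DecidablePred (IsBallot m) := fun _ => by
  unfold IsBallot; infer_instance

def ballotSets (m k : ℕ) : Finset (Finset ℕ) :=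
  {T ∈ (Icc 1 m).powersetCard k | IsBallot m T}

lemma mem_ballotSets {m k : ℕ} {T : Finset ℕ} :
    T ∈ ballotSets m k ↔ T ⊆ Icc 1 m ∧ #T = k ∧ IsBallot m T := by
  rw [ballotSets, mem_filter, mem_powersetCard, and_assoc]

abbrev shiftEmb : ℕ ↪ ℕ := addRightEmbedding 1

lemma card_filter_lt_map_shift (S : Finset ℕ) (x : ℕ) :
    #{y ∈ S.map shiftEmb | x + 1 < y} = #{y ∈ S | x < y} := by
  rw [filter_map, card_map]
  congr 2
  ext y
  simp

lemma isBallot_map_shift {m : ℕ} {S : Finset ℕ} :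
    IsBallot (m + 1) (S.map shiftEmb) ↔ IsBallot m S := by
  simp only [IsBallot, forall_mem_map, shiftEmb, addRightEmbedding_apply]
  refine forall₂_congr fun x _ => ?_
  rw [card_filter_lt_map_shift]
  omega

lemma isBallot_insert_one_map_shift {m : ℕ} {S : Finset ℕ} (hS : 0 ∉ S) :
    IsBallot (m + 1) (insert 1 (S.map shiftEmb)) ↔ 2 * #S ≤ m ∧ IsBallot m S := by
  have hpos : ∀ y ∈ S, 1 < y + 1 := fun y hy => by
    have : y ≠ 0 := fun h => hS (h ▸ hy)
    omega
  have hgt : {y ∈ insert 1 (S.map shiftEmb) | 1 < y} = S.map shiftEmb := by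
    rw [filter_insert, if_neg (lt_irrefl 1), filter_true_of_mem]
    simpa using hpos
  rw [IsBallot, forall_mem_insert, hgt, card_map, ← isBallot_map_shift]
  refine and_congr (by omega) (forall₂_congr fun y hy => ?_)
  obtain ⟨z, hz, rfl⟩ := mem_map.1 hy
  rw [filter_insert, if_neg (by simp)]

lemma subset_Icc_two_iff {m : ℕ} {T : Finset ℕ} :
    T ⊆ Icc 2 (m + 1) ↔ ∃ S ⊆ Icc 1 m, T = S.map shiftEmb := by
  rw [show Icc 2 (m + 1) = (Icc 1 m).map shiftEmb by rw [map_add_right_Icc]]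
  exact subset_map_iff

lemma subset_Icc_two_of_one_notMem {m : ℕ} {T : Finset ℕ} (hT : T ⊆ Icc 1 (m + 1))
    (h1 : 1 ∉ T) : T ⊆ Icc 2 (m + 1) := fun y hy => by
  have := mem_Icc.1 (hT hy)
  have : y ≠ 1 := fun h => h1 (h ▸ hy)
  exact mem_Icc.2 ⟨by omega, by omega⟩

lemma zero_notMem_of_subset_Icc {m : ℕ} {S : Finset ℕ} (hS : S ⊆ Icc 1 m) : 0 ∉ S :=
  fun h => by simpa using hS h

lemma one_notMem_map_shift {S : Finset ℕ} (hS : 0 ∉ S) : 1 ∉ S.map shiftEmb := by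
  simpa using hS

lemma filter_one_notMem_ballotSets (m k : ℕ) :
    {T ∈ ballotSets (m + 1) k | 1 ∉ T} =
      (ballotSets m k).map (mapEmbedding shiftEmb).toEmbedding := by
  ext T
  simp only [mem_filter, mem_map, mem_ballotSets, RelEmbedding.coe_toEmbedding,
    mapEmbedding_apply]
  constructor
  · rintro ⟨⟨hsub, rfl, hT⟩, h1⟩
    obtain ⟨S, hS, rfl⟩ := subset_Icc_two_iff.1 (subset_Icc_two_of_one_notMem hsub h1)
    exact ⟨S, ⟨hS, (card_map _).symm, isBallot_map_shift.1 hT⟩, rfl⟩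
  · rintro ⟨S, ⟨hS, rfl, hSb⟩, rfl⟩
    have h2 := subset_Icc_two_iff.2 ⟨S, hS, rfl⟩
    exact ⟨⟨h2.trans (Icc_subset_Icc_left one_le_two), card_map _, isBallot_map_shift.2 hSb⟩,
      one_notMem_map_shift (zero_notMem_of_subset_Icc hS)⟩

lemma filter_one_mem_ballotSets (m k : ℕ) :
    {T ∈ ballotSets (m + 1) (k + 1) | 1 ∈ T} =
      ((ballotSets m k).filter fun _ => 2 * k ≤ m).image fun S => insert 1 (S.map shiftEmb) := by
  ext T
  simp only [mem_filter, mem_image, mem_ballotSets]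
  constructor
  · rintro ⟨⟨hsub, hcard, hT⟩, h1⟩
    obtain ⟨S, hS, hSe⟩ := subset_Icc_two_iff.1
      (subset_Icc_two_of_one_notMem ((erase_subset 1 T).trans hsub) (notMem_erase 1 T))
    have hTS : T = insert 1 (S.map shiftEmb) := by rw [← hSe, insert_erase h1]
    have hSk : #S = k := by
      rw [← card_map shiftEmb, ← hSe, card_erase_of_mem h1, hcard, Nat.add_sub_cancel]
    rw [hTS, isBallot_insert_one_map_shift (zero_notMem_of_subset_Icc hS), hSk] at hT
    exact ⟨S, ⟨⟨hS, hSk, hT.2⟩, hT.1⟩, hTS.symm⟩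
  · rintro ⟨S, ⟨⟨hS, rfl, hSb⟩, hk⟩, rfl⟩
    have h2 := subset_Icc_two_iff.2 ⟨S, hS, rfl⟩
    refine ⟨⟨insert_subset (by simp) (h2.trans (Icc_subset_Icc_left one_le_two)), ?_,
      (isBallot_insert_one_map_shift (zero_notMem_of_subset_Icc hS)).2 ⟨hk, hSb⟩⟩,
      mem_insert_self 1 _⟩
    rw [card_insert_of_notMem (one_notMem_map_shift (zero_notMem_of_subset_Icc hS)), card_map]

lemma card_filter_one_mem_ballotSets (m k : ℕ) :
    #{T ∈ ballotSets (m + 1) (k + 1) | 1 ∈ T} = if 2 * k ≤ m then #(ballotSets m k) else 0 := by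
  rw [filter_one_mem_ballotSets, card_image_of_injOn, filter_const]
  · split_ifs <;> simp
  intro S hS S' hS' h
  simp only [coe_filter, mem_ballotSets, Set.mem_ofPred_eq] at hS hS'
  have := congrArg (Finset.erase · 1) h
  simp only [erase_insert (one_notMem_map_shift (zero_notMem_of_subset_Icc hS.1.1)),
    erase_insert (one_notMem_map_shift (zero_notMem_of_subset_Icc hS'.1.1))] at this
  exact map_injective shiftEmb this

lemma card_ballotSets_succ_succ (m k : ℕ) :
    #(ballotSets (m + 1) (k + 1)) =
      #(ballotSets m (k + 1)) + if 2 * k ≤ m then #(ballotSets m k) else 0 := by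
  rw [← card_filter_add_card_filter_not (fun T => 1 ∈ T), card_filter_one_mem_ballotSets,
    filter_one_notMem_ballotSets, card_map, add_comm]

lemma ballotSets_zero_right (m : ℕ) : ballotSets m 0 = {∅} := by
  ext T
  simp only [mem_ballotSets, card_eq_zero, mem_singleton]
  exact ⟨fun h => h.2.1, by rintro rfl; simp [IsBallot]⟩

lemma ballotSets_zero_succ (k : ℕ) : ballotSets 0 (k + 1) = ∅ := by
  simp [ballotSets]

lemma card_ballotSets_succ (m k : ℕ) :
    (#(ballotSets m (k + 1)) : ℤ) =
      if 2 * (k + 1) ≤ m + 1 then ((m + 1).choose (k + 1) : ℤ) - (m + 1).choose k else 0 := by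
  induction m generalizing k with
  | zero => simp [ballotSets_zero_succ]; omega
  | succ m ih =>
    rw [card_ballotSets_succ_succ, Nat.cast_add, ih, Nat.cast_ite, Nat.cast_zero]
    rcases k with _ | k
    · simp [ballotSets_zero_right]
      omega
    · rw [ih, Nat.choose_succ_succ' (m + 1) (k + 1), Nat.choose_succ_succ' (m + 1) k]
      push_cast
      split_ifs <;> try omega
      obtain rfl : m = 2 * k + 2 := by omega
      have hsymm : (2 * k + 2 + 1).choose (k + 1 + 1) = (2 * k + 2 + 1).choose (k + 1) :=
        Nat.choose_symm_half (k + 1)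
      rw [hsymm]
      ring

/-! ### Admissible monomials on a chain -/

section Admissible

variable {n : ℕ}

/-- The closed intervals `[p - m p, p]`, `p ∈ m.support`, lie in `[1, n]` and are pairwise
disjoint. -/
def IsAdmissible (m : Fin (n + 1) →₀ ℕ) : Prop :=
  (∀ p ∈ m.support, m p < p) ∧
    ∀ p ∈ m.support, ∀ q ∈ m.support, (q : ℕ) < p → (q : ℕ) + m p < p

def SuffixBound (m : Fin (n + 1) →₀ ℕ) : Prop :=
  ∀ p ∈ m.support, (p : ℕ) + m p + 2 * ∑ q ∈ m.support with p < q, m q ≤ n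

def coveredSet (m : Fin (n + 1) →₀ ℕ) : Finset ℕ :=
  m.support.biUnion fun p => Ico (p - m p) p

/-- Each maximal run `[p - r, p)` of `T` becomes the exponent `r` at `p`. -/
noncomputable def ofCoveredSet (n : ℕ) (T : Finset ℕ) : Fin (n + 1) →₀ ℕ :=
  Finsupp.equivFunOnFinite.symm fun p => if (p : ℕ) ∈ T then 0 else runLength T p

lemma ofCoveredSet_apply (T : Finset ℕ) (p : Fin (n + 1)) :
    ofCoveredSet n T p = if (p : ℕ) ∈ T then 0 else runLength T p := rfl

lemma mem_coveredSet {m : Fin (n + 1) →₀ ℕ} {x : ℕ} :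
    x ∈ coveredSet m ↔ ∃ p ∈ m.support, p - m p ≤ x ∧ x < p := by
  simp [coveredSet]

variable {m : Fin (n + 1) →₀ ℕ}

lemma IsAdmissible.mem_coveredSet_iff (hm : IsAdmissible m) {p : Fin (n + 1)}
    (hp : p ∈ m.support) {x : ℕ} (hx₁ : p - m p - 1 ≤ x) (hx₂ : x ≤ p) :
    x ∈ coveredSet m ↔ p - m p ≤ x ∧ x < p := by
  refine ⟨fun hx => ?_, fun hx => mem_coveredSet.2 ⟨p, hp, hx⟩⟩
  obtain ⟨q, hq, hqx, hxq⟩ := mem_coveredSet.1 hx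
  rcases lt_trichotomy (q : ℕ) p with hqp | hqp | hqp
  · have := hm.2 p hp q hq hqp
    omega
  · rw [Fin.ext hqp] at hqx
    omega
  · have := hm.2 q hq p hp hqp
    omega

lemma IsAdmissible.val_notMem_coveredSet (hm : IsAdmissible m) {p : Fin (n + 1)}
    (hp : p ∈ m.support) : (p : ℕ) ∉ coveredSet m := by
  have := hm.1 p hp
  rw [hm.mem_coveredSet_iff hp (by omega) le_rfl]
  omega

lemma IsAdmissible.bot_lt (hm : IsAdmissible m) {p : Fin (n + 1)}
    (hp : p ∈ m.support) : ⊥ < p := by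
  have := hm.1 p hp
  exact bot_lt_iff_ne_bot.2 fun h => by subst h; exact Nat.not_lt_zero _ this

lemma IsAdmissible.card_biUnion_Ico (hm : IsAdmissible m) {S : Finset (Fin (n + 1))}
    (hS : S ⊆ m.support) : #(S.biUnion fun p => Ico (p - m p) p) = ∑ p ∈ S, m p := by
  rw [Finset.card_biUnion]
  · refine sum_congr rfl fun p hp => ?_
    have := hm.1 p (hS hp)
    rw [Nat.card_Ico]
    omega
  · intro p hp q hq hpq
    refine disjoint_left.2 fun x hxp hxq => ?_
    rw [mem_Ico] at hxp hxq
    rcases lt_trichotomy (q : ℕ) p with h | h | h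
    · have := hm.2 p (hS hp) q (hS hq) h
      omega
    · exact hpq (Fin.ext h.symm)
    · have := hm.2 q (hS hq) p (hS hp) h
      omega

lemma IsAdmissible.card_coveredSet (hm : IsAdmissible m) : #(coveredSet m) = mdeg m :=
  hm.card_biUnion_Ico subset_rfl

lemma IsAdmissible.coveredSet_subset (hm : IsAdmissible m) : coveredSet m ⊆ Icc 1 (n - 1) := by
  intro x hx
  obtain ⟨p, hp, hpx, hxp⟩ := mem_coveredSet.1 hx
  have := hm.1 p hp
  have := p.isLt
  exact mem_Icc.2 ⟨by omega, by omega⟩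

lemma IsAdmissible.ofCoveredSet_coveredSet (hm : IsAdmissible m) :
    ofCoveredSet n (coveredSet m) = m := by
  ext p
  rw [ofCoveredSet_apply]
  by_cases hp : p ∈ m.support
  · have := hm.1 p hp
    rw [if_neg (hm.val_notMem_coveredSet hp)]
    refine runLength_eq this.le (fun x hx => ?_) ?_
    · exact mem_coveredSet.2 ⟨p, hp, (mem_Ico.1 hx).1, (mem_Ico.1 hx).2⟩
    · rw [or_iff_not_imp_left, hm.mem_coveredSet_iff hp le_rfl (by omega)]
      omega
  · rw [Finsupp.notMem_support_iff.1 hp]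
    split_ifs with hpT
    · rfl
    refine not_not.1 fun hne => ?_
    obtain ⟨hp1, q, hq, hqp, hpq⟩ := (runLength_ne_zero_iff.1 hne).imp_right mem_coveredSet.1
    rcases (show (p : ℕ) ≤ q by omega).lt_or_eq with h | h
    · exact hpT (mem_coveredSet.2 ⟨q, hq, by omega, h⟩)
    · exact hp (Fin.ext h ▸ hq)

lemma mem_support_ofCoveredSet {T : Finset ℕ} {p : Fin (n + 1)} :
    p ∈ (ofCoveredSet n T).support ↔ (p : ℕ) ∉ T ∧ 1 ≤ (p : ℕ) ∧ (p : ℕ) - 1 ∈ T := by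
  rw [Finsupp.mem_support_iff, ofCoveredSet_apply]
  split_ifs with h
  · simp [h]
  · rw [runLength_ne_zero_iff]
    tauto

lemma isAdmissible_ofCoveredSet {T : Finset ℕ} (hT : 0 ∉ T) :
    IsAdmissible (ofCoveredSet n T) := by
  constructor
  · intro p hp
    rw [ofCoveredSet_apply, if_neg (mem_support_ofCoveredSet.1 hp).1]
    refine (runLength_le T p).lt_of_ne fun h => hT (Ico_runLength_subset T p ?_)
    have := (mem_support_ofCoveredSet.1 hp).2.1
    rw [h, Nat.sub_self]
    exact mem_Ico.2 ⟨le_rfl, by omega⟩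
  · intro p hp q hq hqp
    rw [ofCoveredSet_apply, if_neg (mem_support_ofCoveredSet.1 hp).1]
    refine not_le.1 fun h => (mem_support_ofCoveredSet.1 hq).1 (Ico_runLength_subset T p ?_)
    exact mem_Ico.2 ⟨by omega, hqp⟩

lemma coveredSet_ofCoveredSet {T : Finset ℕ} (hT : T ⊆ Icc 1 (n - 1)) :
    coveredSet (ofCoveredSet n T) = T := by
  ext x
  rw [mem_coveredSet]
  constructor
  · rintro ⟨p, hp, hpx, hxp⟩
    rw [ofCoveredSet_apply, if_neg (mem_support_ofCoveredSet.1 hp).1] at hpx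
    exact Ico_runLength_subset T p (mem_Ico.2 ⟨hpx, hxp⟩)
  · intro hx
    have hxn := mem_Icc.1 (hT hx)
    have hnT : n ∉ T := fun h => by have := mem_Icc.1 (hT h); omega
    have hex : ∃ p, x < p ∧ p ∉ T := ⟨n, by omega, hnT⟩
    obtain ⟨hxp, hpT⟩ := Nat.find_spec hex
    have hpn : Nat.find hex ≤ n := Nat.find_min' hex ⟨by omega, hnT⟩
    have hrun : Ico x (Nat.find hex) ⊆ T := fun y hy => by
      rcases (mem_Ico.1 hy).1.eq_or_lt with rfl | hxy
      · exact hx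
      · exact not_not.1 fun hyT => Nat.find_min hex (mem_Ico.1 hy).2 ⟨hxy, hyT⟩
    have hle := (le_runLength_iff T (x := Nat.find hex) (k := Nat.find hex - x) (by omega)).2
      (by rwa [Nat.sub_sub_self hxp.le])
    let p : Fin (n + 1) := ⟨Nat.find hex, by omega⟩
    refine ⟨p, mem_support_ofCoveredSet.2 ⟨hpT, by simp [p], hrun ?_⟩, ?_, hxp⟩
    · exact mem_Ico.2 ⟨by simp [p]; omega, by simp [p]⟩
    · rw [ofCoveredSet_apply, if_neg hpT]
      simp only [p]
      omega

lemma IsAdmissible.card_filter_lt_coveredSet (hm : IsAdmissible m) {p : Fin (n + 1)}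
    (hp : p ∈ m.support) {x : ℕ} (hpx : p - m p ≤ x) (hxp : x < p) :
    #{y ∈ coveredSet m | x < y} = (p - x - 1) + ∑ q ∈ m.support with p < q, m q := by
  have hsplit : {y ∈ coveredSet m | x < y} =
      Ioo x p ∪ {q ∈ m.support | p < q}.biUnion fun q => Ico (q - m q) q := by
    ext y
    simp only [mem_filter, mem_union, mem_Ioo, mem_biUnion, mem_Ico, mem_coveredSet]
    constructor
    · rintro ⟨⟨q, hq, hqy, hyq⟩, hxy⟩
      rcases lt_trichotomy (q : ℕ) p with h | h | h
      · have := hm.2 p hp q hq h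
        omega
      · exact Or.inl ⟨hxy, h ▸ hyq⟩
      · exact Or.inr ⟨q, ⟨hq, h⟩, hqy, hyq⟩
    · rintro (⟨hxy, hyp⟩ | ⟨q, ⟨hq, hpq⟩, hqy, hyq⟩)
      · exact ⟨⟨p, hp, by omega, hyp⟩, hxy⟩
      · have := hm.2 q hq p hp hpq
        exact ⟨⟨q, hq, hqy, hyq⟩, by omega⟩
  have hdisj : Disjoint (Ioo x p) ({q ∈ m.support | p < q}.biUnion fun q => Ico (q - m q) q) := by
    simp only [disjoint_left, mem_Ioo, mem_biUnion, mem_filter, mem_Ico, not_exists, not_and]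
    intro y hy q ⟨hq, hpq⟩ hqy
    have := hm.2 q hq p hp hpq
    omega
  rw [hsplit, card_union_of_disjoint hdisj, Nat.card_Ioo, hm.card_biUnion_Ico (filter_subset _ _)]

lemma IsAdmissible.suffixBound_iff_isBallot (hm : IsAdmissible m) :
    SuffixBound m ↔ IsBallot (n - 2) (coveredSet m) := by
  constructor
  · intro hsuf x hx
    obtain ⟨p, hp, hpx, hxp⟩ := mem_coveredSet.1 hx
    have := hsuf p hp
    rw [hm.card_filter_lt_coveredSet hp hpx hxp]
    omega
  · intro hbal p hp
    have := hm.1 p hp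
    have := Finsupp.mem_support_iff.1 hp
    have hx := hbal (p - m p) (mem_coveredSet.2 ⟨p, hp, le_rfl, by omega⟩)
    rw [hm.card_filter_lt_coveredSet hp le_rfl (by omega)] at hx
    omega

lemma ncard_isAdmissible (Q : Finset ℕ → Prop) [DecidablePred Q] :
    {m : Fin (n + 1) →₀ ℕ | IsAdmissible m ∧ Q (coveredSet m)}.ncard =
      #{T ∈ (Icc 1 (n - 1)).powerset | Q T} := by
  rw [← Set.ncard_coe_finset]
  refine Set.ncard_congr (fun m _ => coveredSet m) (fun m ⟨hm, hQ⟩ => ?_)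
    (fun a b ⟨ha, _⟩ ⟨hb, _⟩ hab => ?_) (fun T hT => ?_)
  · simpa using ⟨hm.coveredSet_subset, hQ⟩
  · rw [← ha.ofCoveredSet_coveredSet, ← hb.ofCoveredSet_coveredSet, hab]
  · simp only [coe_filter, mem_powerset, Set.mem_ofPred_eq] at hT
    refine ⟨ofCoveredSet n T, ⟨isAdmissible_ofCoveredSet (zero_notMem_of_subset_Icc hT.1), ?_⟩,
      coveredSet_ofCoveredSet hT.1⟩
    rw [coveredSet_ofCoveredSet hT.1]
    exact hT.2

end Admissible

/-! ### Chains with exponents -/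

section Chain

variable {P : Type} {s : ℕ}

noncomputable def chainMonomial (f : Fin s → P) (ℓ : Fin s → ℕ) : P →₀ ℕ :=
  ∑ i, Finsupp.single (f i) (ℓ i)

lemma mdeg_eq_degree {σ : Type} (m : σ →₀ ℕ) : mdeg m = m.degree := rfl

lemma mdeg_chainMonomial (f : Fin s → P) (ℓ : Fin s → ℕ) : mdeg (chainMonomial f ℓ) = ∑ i, ℓ i := by
  simp [mdeg_eq_degree, chainMonomial]

variable {f : Fin s → P} {ℓ : Fin s → ℕ}

lemma chainMonomial_apply (hf : f.Injective) (i : Fin s) : chainMonomial f ℓ (f i) = ℓ i := by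
  rw [chainMonomial, Finsupp.finsetSum_apply, sum_eq_single i (fun j _ hji => ?_) (by simp)]
  · simp
  · exact Finsupp.single_eq_of_ne (hf.ne hji.symm)

lemma chainMonomial_apply_eq_zero {x : P} (hx : ∀ i, f i ≠ x) : chainMonomial f ℓ x = 0 := by
  simp [chainMonomial, Finsupp.finsetSum_apply, hx]

lemma support_chainMonomial (hf : f.Injective) (hℓ : ∀ i, ℓ i ≠ 0) :
    (chainMonomial f ℓ).support = univ.map ⟨f, hf⟩ := by
  ext x
  rw [Finsupp.mem_support_iff, mem_map]
  constructor
  · intro hx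
    by_contra! h
    exact hx (chainMonomial_apply_eq_zero fun i => h i (mem_univ i))
  · rintro ⟨i, -, rfl⟩
    exact (chainMonomial_apply hf i).trans_ne (hℓ i)

lemma mem_support_chainMonomial (hf : f.Injective) (hℓ : ∀ i, ℓ i ≠ 0) {p : P} :
    p ∈ (chainMonomial f ℓ).support ↔ ∃ i, f i = p := by
  simp [support_chainMonomial hf hℓ]

lemma sum_chainMonomial_filter_lt [LinearOrder P] (hf : StrictMono f) (hℓ : ∀ i, ℓ i ≠ 0)
    (i : Fin s) :
    ∑ q ∈ (chainMonomial f ℓ).support with f i < q, chainMonomial f ℓ q =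
      ∑ j with i < j, ℓ j := by
  rw [support_chainMonomial hf.injective hℓ, filter_map, sum_map]
  simp [hf.lt_iff_lt, chainMonomial_apply hf.injective]

lemma chainMonomial_inj [LinearOrder P] {g : Fin s → P} {ℓ' : Fin s → ℕ} (hf : StrictMono f)
    (hg : StrictMono g) (hℓ : ∀ i, ℓ i ≠ 0) (hℓ' : ∀ i, ℓ' i ≠ 0)
    (h : chainMonomial f ℓ = chainMonomial g ℓ') : f = g ∧ ℓ = ℓ' := by
  have hfg : f = g := by
    have := congrArg (fun m : P →₀ ℕ => (m.support : Set P)) h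
    simp only [support_chainMonomial hf.injective hℓ, support_chainMonomial hg.injective hℓ',
      coe_map, coe_univ, Set.image_univ] at this
    exact (hf.range_inj hg).1 this
  subst hfg
  refine ⟨rfl, funext fun i => ?_⟩
  rw [← chainMonomial_apply hf.injective (ℓ := ℓ) i, h, chainMonomial_apply hf.injective]

lemma card_support_chainMonomial (hf : f.Injective) (hℓ : ∀ i, ℓ i ≠ 0) :
    #(chainMonomial f ℓ).support = s := by
  rw [support_chainMonomial hf hℓ, card_map, card_univ, Fintype.card_fin]

noncomputable def supportChain [LinearOrder P] (m : P →₀ ℕ) : Fin #m.support ↪o P :=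
  m.support.orderEmbOfFin rfl

lemma supportChain_mem [LinearOrder P] (m : P →₀ ℕ) (i : Fin #m.support) :
    supportChain m i ∈ m.support :=
  orderEmbOfFin_mem _ rfl i

lemma chainMonomial_supportChain [LinearOrder P] (m : P →₀ ℕ) :
    chainMonomial (supportChain m) (fun i => m (supportChain m i)) = m := by
  ext x
  by_cases hx : x ∈ m.support
  · obtain ⟨i, rfl⟩ : x ∈ Set.range (supportChain m) := by
      rwa [supportChain, range_orderEmbOfFin]
    exact chainMonomial_apply (supportChain m).injective i
  · rw [Finsupp.notMem_support_iff.1 hx]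
    exact chainMonomial_apply_eq_zero fun i h => hx (h ▸ supportChain_mem m i)

end Chain

lemma lt_gap_iff {Q : Type} [PartialOrder Q] (ρ : Q → ℕ) {s : ℕ} {f : Fin s → Q}
    (hf : Monotone (ρ ∘ f)) (i : Fin s) (ℓ : ℕ) :
    ℓ < gap ρ f i ↔ ℓ < ρ (f i) ∧ ∀ j < i, ρ (f j) + ℓ < ρ (f i) := by
  unfold gap
  split_ifs with hi
  · have : ∀ j, ¬ j < i := fun j hj => by rw [Fin.lt_def] at hj; omega
    simp [this]
  · have hprev : ∀ j < i, ρ (f j) ≤ ρ (f ⟨i - 1, by omega⟩) := fun j hj =>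
      hf (show j ≤ ⟨i - 1, by omega⟩ by simp only [Fin.lt_def, Fin.le_def] at hj ⊢; omega)
    constructor
    · intro h
      exact ⟨by omega, fun j hj => by have := hprev j hj; omega⟩
    · rintro ⟨-, h⟩
      have := h ⟨i - 1, by omega⟩ (by simp only [Fin.lt_def]; omega)
      omega

section OnChain

variable {n s : ℕ} {f : Fin s → Fin (n + 1)} {ℓ : Fin s → ℕ}

lemma isAdmissible_chainMonomial_iff (hf : StrictMono f) (hℓ : ∀ i, ℓ i ≠ 0) :
    IsAdmissible (chainMonomial f ℓ) ↔ ∀ i, ℓ i < gap (fun p : Fin (n + 1) => (p : ℕ)) f i := by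
  simp only [IsAdmissible, support_chainMonomial hf.injective hℓ, forall_mem_map, mem_univ,
    forall_const, Function.Embedding.coeFn_mk, chainMonomial_apply hf.injective,
    lt_gap_iff _ (Fin.val_strictMono.comp hf).monotone, Fin.val_fin_lt,
    hf.lt_iff_lt, forall_and]

lemma suffixBound_chainMonomial_iff (hf : StrictMono f) (hℓ : ∀ i, ℓ i ≠ 0) :
    SuffixBound (chainMonomial f ℓ) ↔ ∀ i, f i + ℓ i + 2 * ∑ j with i < j, ℓ j ≤ n := by
  constructor
  · intro h i
    have := h (f i) ((mem_support_chainMonomial hf.injective hℓ).2 ⟨i, rfl⟩)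
    rwa [chainMonomial_apply hf.injective, sum_chainMonomial_filter_lt hf hℓ] at this
  · intro h p hp
    obtain ⟨i, rfl⟩ := (mem_support_chainMonomial hf.injective hℓ).1 hp
    rw [chainMonomial_apply hf.injective, sum_chainMonomial_filter_lt hf hℓ]
    exact h i

lemma isAdmissible_iff_supportChain (m : Fin (n + 1) →₀ ℕ) :
    IsAdmissible m ↔
      ∀ i, m (supportChain m i) < gap (fun p : Fin (n + 1) => (p : ℕ)) (supportChain m) i := by
  conv_lhs => rw [← chainMonomial_supportChain m]
  exact isAdmissible_chainMonomial_iff (supportChain m).strictMono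
    fun i => Finsupp.mem_support_iff.1 (supportChain_mem m i)

end OnChain

lemma isSFY_iff {n : ℕ} (m : Fin (n + 1) →₀ ℕ) :
    IsSFY (fun p : Fin (n + 1) => (p : ℕ)) m ↔ IsAdmissible m ∧ SuffixBound m := by
  have htop : ((⊤ : Fin (n + 1)) : ℕ) = n := rfl
  constructor
  · rintro ⟨s, f, ℓ, hmono, -, -, hℓ₁, hgap, hsuf, rfl⟩
    have hf : StrictMono f := fun i j h => hmono i j h
    have hℓ : ∀ i, ℓ i ≠ 0 := fun i => Nat.one_le_iff_ne_zero.1 (hℓ₁ i)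
    refine ⟨(isAdmissible_chainMonomial_iff hf hℓ).2 hgap,
      (suffixBound_chainMonomial_iff hf hℓ).2 fun i => ?_⟩
    have := hsuf i
    simp only [htop, ← Nat.cast_sum] at this
    omega
  · rintro ⟨hA, hS⟩
    set f := supportChain m
    have hℓ : ∀ i, m (f i) ≠ 0 := fun i => Finsupp.mem_support_iff.1 (supportChain_mem m i)
    have hsuf := (suffixBound_chainMonomial_iff f.strictMono hℓ).1
      (by rwa [chainMonomial_supportChain])
    refine ⟨#m.support, f, fun i => m (f i), fun i j h => f.strictMono h,
      fun i => hA.bot_lt (supportChain_mem m i), fun i => ?_,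
      fun i => Nat.one_le_iff_ne_zero.2 (hℓ i), (isAdmissible_iff_supportChain m).1 hA,
      fun i => ?_, (chainMonomial_supportChain m).symm⟩
    · have := hsuf i
      have := hℓ i
      rw [Fin.lt_def, htop]
      omega
    · have := hsuf i
      simp only [htop, ← Nat.cast_sum]
      omega

/-! ### The Chow polynomial -/

open scoped Classical in
noncomputable def weightedChains {Q : Type} [Fintype Q] [PartialOrder Q] [BoundedOrder Q]
    (ρ : Q → ℕ) (k : ℕ) : Finset (Σ s, Σ _ : Fin s → Q, Fin s → ℕ) :=
  (range (Fintype.card Q + 1)).sigma fun s =>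
    (univ.filter fun f : Fin s → Q => (∀ i j, i < j → f i < f j) ∧ ∀ i, ⊥ < f i).sigma fun f =>
      {e ∈ Fintype.piFinset fun i => Ico 1 (gap ρ f i) | k = ∑ i, e i}

lemma coeff_chowPoly {Q : Type} [Fintype Q] [PartialOrder Q] [BoundedOrder Q] (ρ : Q → ℕ)
    (k : ℕ) : (chowPoly ρ).coeff k = #(weightedChains ρ k) := by
  simp only [chowPoly, Polynomial.finsetSum_coeff, prod_univ_sum, prod_pow_eq_pow_sum,
    Polynomial.coeff_X_pow, sum_boole, ← Nat.cast_sum, ← card_sigma, weightedChains]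

lemma mem_weightedChains {Q : Type} [Fintype Q] [PartialOrder Q] [BoundedOrder Q] {ρ : Q → ℕ}
    {k s : ℕ} {f : Fin s → Q} {e : Fin s → ℕ} :
    ⟨s, f, e⟩ ∈ weightedChains ρ k ↔ s ≤ Fintype.card Q ∧ StrictMono f ∧ (∀ i, ⊥ < f i) ∧
      (∀ i, e i ≠ 0 ∧ e i < gap ρ f i) ∧ ∑ i, e i = k := by
  simp only [weightedChains, mem_sigma, mem_range, Nat.lt_succ_iff, mem_filter, mem_univ,
    true_and, Fintype.mem_piFinset, mem_Ico, Nat.one_le_iff_ne_zero, eq_comm (a := k), and_assoc]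
  rfl

lemma card_weightedChains_eq_ncard (n k : ℕ) :
    #(weightedChains (fun p : Fin (n + 1) => (p : ℕ)) k) =
      {m : Fin (n + 1) →₀ ℕ | IsAdmissible m ∧ mdeg m = k}.ncard := by
  rw [← Set.ncard_coe_finset]
  refine Set.ncard_congr (fun a _ => chainMonomial a.2.1 a.2.2) ?_ ?_ ?_
  · rintro ⟨s, f, e⟩ ha
    obtain ⟨-, hf, -, he, rfl⟩ := mem_weightedChains.1 ha
    exact ⟨(isAdmissible_chainMonomial_iff hf fun i => (he i).1).2 fun i => (he i).2,
      mdeg_chainMonomial f e⟩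
  · rintro ⟨s, f, e⟩ ⟨t, g, e'⟩ ha hb hfg
    obtain ⟨-, hf, -, he, -⟩ := mem_weightedChains.1 ha
    obtain ⟨-, hg, -, he', -⟩ := mem_weightedChains.1 hb
    obtain rfl : s = t := by
      rw [← card_support_chainMonomial hf.injective fun i => (he i).1,
        ← card_support_chainMonomial hg.injective fun i => (he' i).1]
      exact congrArg (fun m => #(Finsupp.support m)) hfg
    obtain ⟨rfl, rfl⟩ := chainMonomial_inj hf hg (fun i => (he i).1) (fun i => (he' i).1) hfg
    rfl
  · rintro m ⟨hm, rfl⟩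
    refine ⟨⟨#m.support, supportChain m, fun i => m (supportChain m i)⟩,
      mem_weightedChains.2 ⟨card_le_univ _, (supportChain m).strictMono,
        fun i => hm.bot_lt (supportChain_mem m i),
        fun i => ⟨Finsupp.mem_support_iff.1 (supportChain_mem m i),
          (isAdmissible_iff_supportChain m).1 hm i⟩, ?_⟩, chainMonomial_supportChain m⟩
    conv_rhs => rw [← chainMonomial_supportChain m]
    exact (mdeg_chainMonomial _ _).symm

lemma card_weightedChains_chain (n k : ℕ) :
    #(weightedChains (fun p : Fin (n + 1) => (p : ℕ)) k) = (n - 1).choose k := by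
  calc #(weightedChains (fun p : Fin (n + 1) => (p : ℕ)) k)
      = {m : Fin (n + 1) →₀ ℕ | IsAdmissible m ∧ #(coveredSet m) = k}.ncard := by
        rw [card_weightedChains_eq_ncard]
        congr! 3 with m
        exact and_congr_right fun hm => by rw [hm.card_coveredSet]
    _ = #(powersetCard k (Icc 1 (n - 1))) := by
        rw [powersetCard_eq_filter]
        exact ncard_isAdmissible fun T => #T = k
    _ = (n - 1).choose k := by simp

lemma ncard_isSFY (n k : ℕ) :
    {m : Fin (n + 1) →₀ ℕ | IsSFY (fun p : Fin (n + 1) => (p : ℕ)) m ∧ mdeg m = k}.ncard =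
      #(ballotSets (n - 2) k) := by
  calc {m : Fin (n + 1) →₀ ℕ | IsSFY (fun p : Fin (n + 1) => (p : ℕ)) m ∧ mdeg m = k}.ncard
      = {m : Fin (n + 1) →₀ ℕ |
          IsAdmissible m ∧ (IsBallot (n - 2) (coveredSet m) ∧ #(coveredSet m) = k)}.ncard := by
        congr! 3 with m
        rw [isSFY_iff, and_assoc]
        exact and_congr_right fun hm => by rw [hm.suffixBound_iff_isBallot, hm.card_coveredSet]
    _ = #(ballotSets (n - 2) k) := by
        rw [ncard_isAdmissible fun T => IsBallot (n - 2) T ∧ #T = k]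
        congr 1
        ext T
        simp only [mem_filter, mem_powerset, mem_ballotSets]
        constructor
        · rintro ⟨hT, hb, hk⟩
          exact ⟨fun x hx => mem_Icc.2 ⟨(mem_Icc.1 (hT hx)).1, hb.le hx⟩, hk, hb⟩
        · rintro ⟨hT, hk, hb⟩
          exact ⟨hT.trans (Icc_subset_Icc_right (by omega)), hb, hk⟩

end ChowChain

open ChowChain Finset in
/-- For the chain `C_n`, the `h`-vector of the monomial order ideal `SFY`
equals the differential sequence `Δh` of the coefficients of the Chow polynomial `H_{C_n}(t)`:
the number of SFY monomials of degree `0` is `1`, and of degree `k` is `h_k - h_{k-1}` for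
`1 ≤ k ≤ ⌊(n-1)/2⌋`. -/
theorem stmt18 (n : ℕ) (h : ℕ → ℤ)
    (hh : ∀ k, h k = (chowPoly (fun i : Fin (n + 1) => (i : ℕ))).coeff k) :
    Set.ncard {m : Fin (n + 1) →₀ ℕ |
        IsSFY (fun i : Fin (n + 1) => (i : ℕ)) m ∧ mdeg m = 0} = 1 ∧
    ∀ k, 1 ≤ k → k ≤ (n - 1) / 2 →
      (Set.ncard {m : Fin (n + 1) →₀ ℕ |
          IsSFY (fun i : Fin (n + 1) => (i : ℕ)) m ∧ mdeg m = k} : ℤ) = h k - h (k - 1) := by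
  refine ⟨by rw [ncard_isSFY, ballotSets_zero_right, card_singleton], fun k hk1 hk2 => ?_⟩
  obtain ⟨j, rfl⟩ : ∃ j, k = j + 1 := ⟨k - 1, by omega⟩
  rw [ncard_isSFY, card_ballotSets_succ, if_pos (by omega), hh, hh, coeff_chowPoly,
    coeff_chowPoly, card_weightedChains_chain, card_weightedChains_chain,
    show n - 2 + 1 = n - 1 by omega, Nat.add_sub_cancel]
end
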